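/- arXiv:1611.06842 — 6 statements merged into one kernel-verified Lean document; each statement's English description precedes it below -/
import Mathlib

section
/- Let P be a finite poset with a unique maximal element and a unique minimal element. Then there exist positive integers m and t such that the family of copies of P in the grid [2|P|]^m contains a t-partition; that is, there exists a weight function w assigning a natural number to each copy of P in [2|P|]^m such that for every element x of [2|P|]^m, the sum of w(F) over all copies F of P containing x equals t. -/
/-- A subset `A` of a poset `Q` is a *copy* of the poset `P` if the subposet of `Q`
induced on `A` is order-isomorphic to `P`. -/
def IsCopy (P : Type*) [PartialOrder P] {Q : Type*} [PartialOrder Q] (A : Set Q) : Prop :=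
  Nonempty (P ≃o A)

open Finset Equiv

namespace CopiesAux


/-- Central binomial squared bound: `C(2m,m)^2 * (2m+1) ≤ 16^m`. -/
lemma sq_centralBinom_le (m : ℕ) : (Nat.centralBinom m)^2 * (2*m+1) ≤ 16^m := by
  induction m with
  | zero => simp [Nat.centralBinom]
  | succ m ih =>
    have key : (m+1) * Nat.centralBinom (m+1) = 2*(2*m+1) * Nat.centralBinom m :=
      Nat.succ_mul_centralBinom_succ m
    have hpos : 0 < (m+1)^2 := by positivity
    refine Nat.le_of_mul_le_mul_left ?_ hpos
    calc (m+1)^2 * ((Nat.centralBinom (m+1))^2 * (2*(m+1)+1))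
        = ((m+1) * Nat.centralBinom (m+1))^2 * (2*m+3) := by ring
      _ = (2*(2*m+1) * Nat.centralBinom m)^2 * (2*m+3) := by rw [key]
      _ = (4*(2*m+1)*(2*m+3)) * ((Nat.centralBinom m)^2 * (2*m+1)) := by ring
      _ ≤ (4*(2*m+1)*(2*m+3)) * 16^m := Nat.mul_le_mul_left _ ih
      _ ≤ ((m+1)^2*16) * 16^m := Nat.mul_le_mul_right _ (by nlinarith)
      _ = (m+1)^2 * 16^(m+1) := by ring

/-- For `d = 2*n^4` we have `n^2 * C(d, d/2) ≤ 2^d`. -/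
lemma central_window_bound (n : ℕ) (hn : 1 ≤ n) :
    n^2 * (2*n^4).choose ((2*n^4)/2) ≤ 2^(2*n^4) := by
  have hd2 : (2*n^4)/2 = n^4 := by omega
  rw [hd2]
  have h := sq_centralBinom_le (n^4)
  have h16 : (16:ℕ)^(n^4) = (4^(n^4))^2 := by
    rw [show (16:ℕ) = 4^2 by norm_num, ← pow_mul, mul_comm, pow_mul]
  have hsq : (n^2 * Nat.centralBinom (n^4))^2 ≤ (4^(n^4))^2 := by
    calc (n^2 * Nat.centralBinom (n^4))^2
        = (Nat.centralBinom (n^4))^2 * (n^4) := by ring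
      _ ≤ (Nat.centralBinom (n^4))^2 * (2*(n^4)+1) := by
          exact Nat.mul_le_mul_left _ (by omega)
      _ ≤ 16^(n^4) := h
      _ = (4^(n^4))^2 := h16
  have hle : n^2 * Nat.centralBinom (n^4) ≤ 4^(n^4) :=
    (Nat.pow_le_pow_iff_left (by norm_num)).mp hsq
  calc n^2 * (2*n^4).choose (n^4) = n^2 * Nat.centralBinom (n^4) := by
        rw [Nat.centralBinom]
    _ ≤ 4^(n^4) := hle
    _ = 2^(2*n^4) := by
        rw [show (4:ℕ) = 2^2 by norm_num, ← pow_mul]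



/-- Cumulative counts: `Fc n d ℓ = n * (C(d,0) + ... + C(d,ℓ-1))`. -/
def Fc (n d : ℕ) (ℓ : ℕ) : ℕ := ∑ j ∈ Finset.range ℓ, n * d.choose j

/-- The level of position `k`: the largest `ℓ ≤ d` with `Fc n d ℓ ≤ k`. -/
def Vc (n d : ℕ) (k : ℕ) : ℕ := Nat.findGreatest (fun ℓ => Fc n d ℓ ≤ k) d

lemma Fc_mono (n d : ℕ) : Monotone (Fc n d) := fun a b hab =>
  Finset.sum_le_sum_of_subset (Finset.range_subset_range.mpr hab)

lemma Fc_succ (n d ℓ : ℕ) : Fc n d (ℓ+1) = Fc n d ℓ + n * d.choose ℓ :=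
  Finset.sum_range_succ _ _

lemma Fc_top (n d : ℕ) : Fc n d (d+1) = n * 2^d := by
  rw [Fc, ← Finset.mul_sum, Nat.sum_range_choose]

lemma Vc_le (n d k : ℕ) : Vc n d k ≤ d := Nat.findGreatest_le d

lemma Fc_Vc_le (n d k : ℕ) : Fc n d (Vc n d k) ≤ k := by
  classical
  rcases Nat.eq_zero_or_pos (Vc n d k) with h | h
  · rw [h]; simp [Fc]
  · exact Nat.findGreatest_spec (P := fun ℓ => Fc n d ℓ ≤ k) (Nat.zero_le d) (by simp [Fc])

lemma lt_Fc_Vc_succ (n d k : ℕ) (hk : k < n * 2^d) : k < Fc n d (Vc n d k + 1) := by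
  classical
  by_cases h : Vc n d k = d
  · rw [h, Fc_top]; exact hk
  · have hlt : Vc n d k < d := lt_of_le_of_ne (Vc_le n d k) h
    have h2 := Nat.findGreatest_is_greatest (P := fun ℓ => Fc n d ℓ ≤ k)
      (Nat.lt_succ_self (Vc n d k)) (by omega)
    simp only [Nat.succ_eq_add_one] at h2
    omega

lemma Vc_eq_iff (n d k ℓ : ℕ) (hk : k < n * 2^d) (hℓ : ℓ ≤ d) :
    Vc n d k = ℓ ↔ (Fc n d ℓ ≤ k ∧ k < Fc n d (ℓ+1)) := by
  constructor
  · rintro rfl; exact ⟨Fc_Vc_le n d k, lt_Fc_Vc_succ n d k hk⟩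
  · rintro ⟨h1, h2⟩
    rcases lt_trichotomy (Vc n d k) ℓ with h | h | h
    · have : Fc n d (Vc n d k + 1) ≤ Fc n d ℓ := Fc_mono n d (by omega)
      have := lt_Fc_Vc_succ n d k hk
      omega
    · exact h
    · have : Fc n d (ℓ+1) ≤ Fc n d (Vc n d k) := Fc_mono n d (by omega)
      have := Fc_Vc_le n d k
      omega

/-- The fibers of `Vc` on `[0, n*2^d)` have binomial sizes. -/
lemma Vc_fiber_card (n d ℓ : ℕ) (hℓ : ℓ ≤ d) :
    ((Finset.range (n * 2^d)).filter (fun k => Vc n d k = ℓ)).card = n * d.choose ℓ := by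
  classical
  have hset : (Finset.range (n * 2^d)).filter (fun k => Vc n d k = ℓ)
      = Finset.Ico (Fc n d ℓ) (Fc n d (ℓ+1)) := by
    ext k
    simp only [Finset.mem_filter, Finset.mem_range, Finset.mem_Ico]
    constructor
    · rintro ⟨hk, hv⟩; exact (Vc_eq_iff n d k ℓ hk hℓ).mp hv
    · rintro ⟨h1, h2⟩
      have hk : k < n * 2^d := by
        have : Fc n d (ℓ+1) ≤ Fc n d (d+1) := Fc_mono n d (by omega)
        rw [Fc_top] at this; omega
      exact ⟨hk, (Vc_eq_iff n d k ℓ hk hℓ).mpr ⟨h1, h2⟩⟩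
  rw [hset, Nat.card_Ico, Fc_succ]
  omega

/-- The key gap property: advancing by `2^d` increases the level by at least `n`. -/
lemma Vc_gap (n d k : ℕ) (hbound : n * (n * d.choose (d/2)) ≤ 2^d)
    (hk : k + 2^d < n * 2^d) : Vc n d k + n ≤ Vc n d (k + 2^d) := by
  by_contra hcon
  push_neg at hcon
  have h1 : Fc n d (Vc n d k) ≤ k := Fc_Vc_le n d k
  have h2 : k + 2^d < Fc n d (Vc n d (k + 2^d) + 1) := lt_Fc_Vc_succ n d _ hk
  have h3 : Fc n d (Vc n d (k + 2^d) + 1) ≤ Fc n d (Vc n d k + n) := Fc_mono n d (by omega)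
  have h4 : Fc n d (Vc n d k + n) ≤ Fc n d (Vc n d k) + n * (n * d.choose (d/2)) := by
    set a := Vc n d k
    have hsplit : Fc n d (a + n) = Fc n d a + ∑ j ∈ Finset.Ico a (a+n), n * d.choose j := by
      simp only [Fc, Finset.range_eq_Ico]
      exact (Finset.sum_Ico_consecutive _ (Nat.zero_le a) (Nat.le_add_right a n)).symm
    have hsum : ∑ j ∈ Finset.Ico a (a+n), n * d.choose j ≤ n * (n * d.choose (d/2)) := by
      calc ∑ j ∈ Finset.Ico a (a+n), n * d.choose j
          ≤ (Finset.Ico a (a+n)).card • (n * d.choose (d/2)) := by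
            refine Finset.sum_le_card_nsmul _ _ _ ?_
            intro j _
            exact Nat.mul_le_mul_left n (Nat.choose_le_middle j d)
        _ = n * (n * d.choose (d/2)) := by
            rw [smul_eq_mul, Nat.card_Ico, Nat.add_sub_cancel_left]
    omega
  omega


lemma Vc_mono (n d : ℕ) {k k' : ℕ} (h : k ≤ k') : Vc n d k ≤ Vc n d k' :=
  Nat.findGreatest_mono (fun _ hℓ => le_trans hℓ h) (le_refl d)


variable {P : Type*} [PartialOrder P] [Fintype P]

/-- The unique minimal element of a finite poset is a bottom element. -/
lemma exists_bot (hmin : ∃! x : P, IsMin x) : ∃ b : P, ∀ p, b ≤ p := by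
  obtain ⟨x₀, hx₀, huniq⟩ := hmin
  refine ⟨x₀, fun p => ?_⟩
  obtain ⟨b, hbp, hbmin⟩ := exists_minimal_le_of_wellFoundedLT (fun _ : P => True) p trivial
  have hb : IsMin b := fun y hy => hbmin.2 trivial hy
  rw [← huniq b hb]; exact hbp

/-- The unique maximal element of a finite poset is a top element. -/
lemma exists_top (hmax : ∃! x : P, IsMax x) : ∃ t : P, ∀ p, p ≤ t := by
  obtain ⟨b, hb⟩ := exists_bot (P := Pᵒᵈ) hmax
  exact ⟨b, hb⟩

/-- A finite poset has a bijective rank function to `Fin (card P)` which is strictly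
monotone (a linear extension). -/
lemma exists_rank : ∃ rk : P ≃ Fin (Fintype.card P), ∀ p q : P, p < q → rk p < rk q := by
  classical
  letI : Fintype (LinearExtension P) := (inferInstance : Fintype P)
  let e : P ≃ LinearExtension P :=
    ⟨fun x => toLinearExtension x, fun x => show P from x, fun _ => rfl, fun _ => rfl⟩
  have hcard : Fintype.card (LinearExtension P) = Fintype.card P := Fintype.card_congr e.symm
  let mo := monoEquivOfFin (LinearExtension P) hcard
  refine ⟨e.trans mo.symm.toEquiv, fun p q hpq => ?_⟩
  have hle : toLinearExtension p ≤ toLinearExtension q := toLinearExtension.monotone' hpq.le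
  have h2 : mo.symm (toLinearExtension p) ≤ mo.symm (toLinearExtension q) :=
    mo.symm.le_iff_le.mpr hle
  have h3 : mo.symm (toLinearExtension p) ≠ mo.symm (toLinearExtension q) := by
    intro hc
    exact hpq.ne (e.injective (mo.symm.injective hc))
  exact lt_of_le_of_ne h2 h3



/-- Any level function with gaps at least `|P|` along strict order relations is realized
by an embedding of `P` into the Boolean cube `2^[d]` (as a family of finsets whose
inclusion order reflects the order of `P`). -/
lemma exists_Phi {P : Type*} [PartialOrder P] [Fintype P] (n : ℕ)
    (hcard : Fintype.card P = n)
    (rk : P ≃ Fin n) (hrk : ∀ p q : P, p < q → rk p < rk q)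
    (b t : P) (hb : ∀ p, b ≤ p) (ht : ∀ p, p ≤ t)
    (d : ℕ) (hnd : n ≤ d)
    (L : P → ℕ) (hgap : ∀ p q, p < q → L p + n ≤ L q) (hLd : ∀ p, L p ≤ d) :
    ∃ Φ : P → Finset (Fin d),
      (∀ p, (Φ p).card = L p) ∧ (∀ p q, Φ p ⊆ Φ q ↔ p ≤ q) := by
  classical
  have hn1 : 1 ≤ n := hcard ▸ Fintype.card_pos_iff.mpr ⟨b⟩
  have hblt : ∀ q : P, q ≠ b → b < q := fun q hq => lt_of_le_of_ne (hb q) (Ne.symm hq)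
  have hrk1 : ∀ q : P, q ≠ b → 1 ≤ (rk q).val := by
    intro q hq
    have h := hrk b q (hblt q hq)
    rw [Fin.lt_def] at h
    omega
  set coord : P → Fin d := fun q => ⟨(rk q).val - 1, by have := (rk q).isLt; omega⟩ with hcoord
  set A : P → Finset (Fin d) :=
    (fun p => (univ.filter (fun q => q ≤ p ∧ q ≠ b)).image coord) with hA
  have coord_inj : ∀ q q' : P, q ≠ b → q' ≠ b → coord q = coord q' → q = q' := by
    intro q q' hq hq' heq
    have h1 := hrk1 q hq
    have h2 := hrk1 q' hq'
    have h3 : (rk q).val - 1 = (rk q').val - 1 := congrArg Fin.val heq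
    exact rk.injective (Fin.ext (by omega))
  have cardA : ∀ p, (A p).card = (univ.filter (fun q => q ≤ p ∧ q ≠ b)).card := by
    intro p
    apply Finset.card_image_of_injOn
    intro q hq q' hq' heq
    rw [mem_coe, mem_filter] at hq hq'
    exact coord_inj q q' hq.2.2 hq'.2.2 heq
  have hcardP : (univ : Finset P).card = n := by rw [Finset.card_univ, hcard]
  have hAle : ∀ p, (A p).card ≤ n - 1 := by
    intro p
    rw [cardA]
    calc (univ.filter (fun q => q ≤ p ∧ q ≠ b)).card ≤ (univ.erase b).card := by
          apply Finset.card_le_card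
          intro q hq
          rw [mem_filter] at hq
          exact Finset.mem_erase.mpr ⟨hq.2.2, mem_univ q⟩
      _ = n - 1 := by rw [Finset.card_erase_of_mem (mem_univ b), hcardP]
  have hAb : (A b).card = 0 := by
    rw [cardA, Finset.card_eq_zero, Finset.filter_eq_empty_iff]
    intro q _
    rintro ⟨hq1, hq2⟩
    exact hq2 (le_antisymm hq1 (hb q))
  have hAL : ∀ p, (A p).card ≤ L p := by
    intro p
    by_cases hpb : p = b
    · subst hpb; rw [hAb]; exact Nat.zero_le _
    · have := hgap b p (hblt p hpb)
      have := hAle p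
      omega
  have hAval : ∀ p, ∀ i ∈ A p, (i : Fin d).val + 2 ≤ n := by
    intro p i hi
    simp only [hA, mem_image] at hi
    obtain ⟨q, hq, rfl⟩ := hi
    simp only [mem_filter] at hq
    have h1 := hrk1 q hq.2.2
    have h2 := (rk q).isLt
    simp only [hcoord]
    omega
  set s : P → ℕ := fun p => L p - (A p).card with hs
  set Bp : ℕ → Finset (Fin d) :=
    (fun c => univ.filter (fun i : Fin d => n - 1 ≤ i.val ∧ i.val < n - 1 + c)) with hBp
  have cardBp : ∀ c, n - 1 + c ≤ d → (Bp c).card = c := by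
    intro c hc
    have h : (Bp c).card = (Finset.Ico (n-1) (n-1+c)).card := by
      refine Finset.card_bij' (fun i _ => (i : Fin d).val)
        (fun k hk => (⟨k, by have := Finset.mem_Ico.mp hk; omega⟩ : Fin d)) ?_ ?_ ?_ ?_
      case _ => -- i maps into Ico
        intro i hi
        simp only [hBp, mem_filter] at hi
        rw [Finset.mem_Ico]
        exact hi.2
      case _ => -- j maps into Bp
        intro k hk
        have hk' := Finset.mem_Ico.mp hk
        simp only [hBp, mem_filter]
        exact ⟨mem_univ _, hk'⟩
      case _ => intro i _; rfl
      case _ => intro k _; rfl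
    rw [h, Nat.card_Ico, Nat.add_sub_cancel_left]
  have cardAt : (A t).card = n - 1 := by
    rw [cardA]
    have h : univ.filter (fun q => q ≤ t ∧ q ≠ b) = univ.erase b := by
      ext q
      rw [mem_filter, Finset.mem_erase]
      exact ⟨fun h => ⟨h.2.2, mem_univ q⟩, fun h => ⟨mem_univ q, ht q, h.1⟩⟩
    rw [h, Finset.card_erase_of_mem (mem_univ b), hcardP]
  have hBle : ∀ p, n - 1 + s p ≤ d := by
    intro p
    by_cases hpt : p = t
    · rw [hpt]
      have := hLd t
      simp only [hs, cardAt]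
      omega
    · have hlt := lt_of_le_of_ne (ht p) hpt
      have h1 := hgap p t hlt
      have h2 := hLd t
      have h3 := hAL p
      simp only [hs]
      omega
  have disj : ∀ p c, Disjoint (A p) (Bp c) := by
    intro p c
    rw [Finset.disjoint_left]
    intro i hiA hiB
    have h1 := hAval p i hiA
    simp only [hBp, mem_filter] at hiB
    omega
  refine ⟨fun p => A p ∪ Bp (s p), fun p => ?_, fun p q => ?_⟩
  · rw [Finset.card_union_of_disjoint (disj p (s p)), cardBp (s p) (hBle p)]
    have := hAL p
    simp only [hs]
    omega
  · constructor
    · -- Φ p ⊆ Φ q → p ≤ q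
      intro hsub
      by_cases hpb : p = b
      · subst hpb; exact hb q
      · have hpA : coord p ∈ A p := by
          simp only [hA, mem_image]
          exact ⟨p, mem_filter.mpr ⟨mem_univ p, le_refl p, hpb⟩, rfl⟩
        have hmem := hsub (Finset.mem_union_left _ hpA)
        rcases Finset.mem_union.mp hmem with hmA | hmB
        · simp only [hA, mem_image] at hmA
          obtain ⟨q', hq', heq⟩ := hmA
          simp only [mem_filter] at hq'
          have hqp : q' = p := coord_inj q' p hq'.2.2 hpb heq
          subst hqp
          exact hq'.2.1
        · have h1 := hAval p _ hpA
          simp only [hBp, mem_filter] at hmB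
          omega
    · -- p ≤ q → Φ p ⊆ Φ q
      intro hpq
      apply Finset.union_subset_union
      · apply Finset.image_subset_image
        intro q' hq'
        rw [mem_filter] at hq' ⊢
        exact ⟨hq'.1, hq'.2.1.trans hpq, hq'.2.2⟩
      · have hsle : s p ≤ s q := by
          rcases eq_or_lt_of_le hpq with heq | hlt
          · subst heq; exact le_refl _
          · have h1 := hgap p q hlt
            have h2 := hAle q
            have h3 := hAL p
            simp only [hs]
            omega
        intro i hi
        simp only [hBp, mem_filter] at hi ⊢
        exact ⟨hi.1, hi.2.1, by omega⟩



/-- Ordered pairs `a < b` in `Fin N`. -/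
abbrev Pairs (N : ℕ) := {ab : Fin N × Fin N // ab.1 < ab.2}

lemma card_pairs_snd {N : ℕ} (c : Fin N) :
    Fintype.card {pr : Pairs N // pr.val.2 = c} = c.val := by
  have e : {pr : Pairs N // pr.val.2 = c} ≃ Fin c.val :=
    { toFun := fun pr => ⟨pr.val.val.1.val, by
        have h := pr.val.prop
        rw [Fin.lt_def, (show pr.val.val.2 = c from pr.prop)] at h
        exact h⟩
      invFun := fun j => ⟨⟨(⟨j.val, lt_trans j.prop c.isLt⟩, c), by
        rw [Fin.lt_def]; exact j.prop⟩, rfl⟩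
      left_inv := by
        rintro ⟨⟨⟨a, b⟩, hab⟩, h⟩
        have hb : b = c := h
        subst hb
        rfl
      right_inv := fun j => rfl }
  rw [Fintype.card_congr e, Fintype.card_fin]

lemma card_pairs_fst {N : ℕ} (c : Fin N) :
    Fintype.card {pr : Pairs N // pr.val.1 = c} = N - 1 - c.val := by
  have e : {pr : Pairs N // pr.val.1 = c} ≃ Fin (N - 1 - c.val) :=
    { toFun := fun pr => ⟨pr.val.val.2.val - c.val - 1, by
        have h := pr.val.prop
        rw [Fin.lt_def, (show pr.val.val.1 = c from pr.prop)] at h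
        have h2 := pr.val.val.2.isLt
        omega⟩
      invFun := fun j => ⟨⟨(c, ⟨c.val + 1 + j.val, by have := j.prop; omega⟩), by
        rw [Fin.lt_def]; simp; omega⟩, rfl⟩
      left_inv := by
        rintro ⟨⟨⟨a, b⟩, hab⟩, h⟩
        have ha : a = c := h
        subst ha
        have hlt : a.val < b.val := hab
        apply Subtype.ext
        apply Subtype.ext
        refine Prod.ext rfl (Fin.ext ?_)
        simp
        omega
      right_inv := by
        intro j
        apply Fin.ext
        simp
        omega }
  rw [Fintype.card_congr e, Fintype.card_fin]

lemma card_gmaps {d N : ℕ} (B : Finset (Fin d)) (x : Fin d → Fin N) :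
    Fintype.card {g : Fin d → Pairs N //
        ∀ i, (if i ∈ B then (g i).val.2 else (g i).val.1) = x i}
      = ∏ i, (if i ∈ B then (x i).val else N - 1 - (x i).val) := by
  rw [Fintype.card_congr (Equiv.subtypePiEquivPi
    (p := fun i (pr : Pairs N) => (if i ∈ B then pr.val.2 else pr.val.1) = x i))]
  rw [Fintype.card_pi]
  apply Finset.prod_congr rfl
  intro i _
  by_cases hi : i ∈ B
  · rw [if_pos hi,
      Fintype.card_congr (Equiv.subtypeEquivRight (fun pr : Pairs N => by rw [if_pos hi]))]
    exact card_pairs_snd (x i)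
  · rw [if_neg hi,
      Fintype.card_congr (Equiv.subtypeEquivRight (fun pr : Pairs N => by rw [if_neg hi]))]
    exact card_pairs_fst (x i)

/-- Combine bijections on `A → B` and `Aᶜ → Bᶜ` into a permutation. -/
def permOfPair {d : ℕ} (A B : Finset (Fin d))
    (e₁ : {a : Fin d // a ∈ A} ≃ {a : Fin d // a ∈ B})
    (e₂ : {a : Fin d // a ∈ Aᶜ} ≃ {a : Fin d // a ∈ Bᶜ}) : Equiv.Perm (Fin d) :=
  (Equiv.sumCompl (· ∈ A)).symm.trans
    ((Equiv.sumCongr e₁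
      ((Equiv.subtypeEquivRight (fun a => (Finset.mem_compl (a := a)).symm)).trans
        (e₂.trans (Equiv.subtypeEquivRight (fun a => Finset.mem_compl (a := a)))))).trans
      (Equiv.sumCompl (· ∈ B)))

lemma permOfPair_pos {d : ℕ} (A B : Finset (Fin d)) (e₁) (e₂) {a : Fin d} (h : a ∈ A) :
    permOfPair A B e₁ e₂ a = (e₁ ⟨a, h⟩ : Fin d) := by
  simp only [permOfPair, Equiv.trans_apply, Equiv.sumCompl_symm_apply_of_pos h,
    Equiv.sumCongr_apply, Sum.map_inl, Equiv.sumCompl_apply_inl]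

lemma permOfPair_neg {d : ℕ} (A B : Finset (Fin d)) (e₁) (e₂) {a : Fin d} (h : ¬ a ∈ A) :
    permOfPair A B e₁ e₂ a = (e₂ ⟨a, Finset.mem_compl.mpr h⟩ : Fin d) := by
  simp only [permOfPair, Equiv.trans_apply, Equiv.sumCompl_symm_apply_of_neg h,
    Equiv.sumCongr_apply, Sum.map_inr, Equiv.sumCompl_apply_inr, Equiv.subtypeEquivRight,
    Equiv.subtypeEquiv, Equiv.refl_apply, Equiv.coe_fn_mk]

lemma permOfPair_image {d : ℕ} (A B : Finset (Fin d)) (e₁) (e₂) (hcard : B.card = A.card) :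
    A.image ⇑(permOfPair A B e₁ e₂) = B := by
  apply Finset.eq_of_subset_of_card_le
  · intro bb hbb
    obtain ⟨a, ha, rfl⟩ := Finset.mem_image.mp hbb
    rw [permOfPair_pos A B e₁ e₂ ha]
    exact (e₁ ⟨a, ha⟩).prop
  · rw [Finset.card_image_of_injective _ (Equiv.injective _)]
    exact le_of_eq hcard

lemma card_perm_image {d : ℕ} (A B : Finset (Fin d)) :
    Fintype.card {σ : Equiv.Perm (Fin d) // A.image ⇑σ = B}
      = if B.card = A.card then Nat.factorial A.card * Nat.factorial (d - A.card) else 0 := by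
  have hmem : ∀ (σ : Equiv.Perm (Fin d)), A.image ⇑σ = B → ∀ a : Fin d, a ∈ A ↔ σ a ∈ B := by
    intro σ hσ a
    constructor
    · intro ha; rw [← hσ]; exact Finset.mem_image_of_mem _ ha
    · intro hb; rw [← hσ] at hb
      obtain ⟨a', ha', heq⟩ := Finset.mem_image.mp hb
      rwa [← σ.injective heq]
  by_cases hcard : B.card = A.card
  · rw [if_pos hcard]
    have e : {σ : Equiv.Perm (Fin d) // A.image ⇑σ = B} ≃
        (({a : Fin d // a ∈ A} ≃ {a : Fin d // a ∈ B}) ×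
         ({a : Fin d // a ∈ Aᶜ} ≃ {a : Fin d // a ∈ Bᶜ})) :=
      { toFun := fun σh =>
          (Equiv.subtypeEquiv σh.val (hmem σh.val σh.prop),
           Equiv.subtypeEquiv σh.val (fun a => by
             rw [Finset.mem_compl, Finset.mem_compl]
             exact not_congr (hmem σh.val σh.prop a))),
        invFun := fun ee => ⟨permOfPair A B ee.1 ee.2, permOfPair_image A B ee.1 ee.2 hcard⟩,
        left_inv := by
          rintro ⟨σ, hσ⟩
          apply Subtype.ext
          apply Equiv.ext
          intro a
          by_cases h : a ∈ A
          · rw [permOfPair_pos _ _ _ _ h]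
            simp [Equiv.subtypeEquiv]
          · rw [permOfPair_neg _ _ _ _ h]
            simp [Equiv.subtypeEquiv]
        right_inv := by
          rintro ⟨e₁, e₂⟩
          refine Prod.ext ?_ ?_
          · apply Equiv.ext
            rintro ⟨a, ha⟩
            apply Subtype.ext
            show permOfPair A B e₁ e₂ a = _
            rw [permOfPair_pos _ _ _ _ ha]
          · apply Equiv.ext
            rintro ⟨a, ha⟩
            apply Subtype.ext
            show permOfPair A B e₁ e₂ a = _
            rw [permOfPair_neg _ _ _ _ (Finset.mem_compl.mp ha)] }
    rw [Fintype.card_congr e, Fintype.card_prod]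
    have h1 : Fintype.card {a : Fin d // a ∈ A} = A.card := Fintype.card_coe A
    have h2 : Fintype.card {a : Fin d // a ∈ B} = A.card := (Fintype.card_coe B).trans hcard
    have h3 : Fintype.card {a : Fin d // a ∈ Aᶜ} = d - A.card := by
      rw [Fintype.card_coe, Finset.card_compl, Fintype.card_fin]
    have h4 : Fintype.card {a : Fin d // a ∈ Bᶜ} = d - A.card := by
      rw [Fintype.card_coe, Finset.card_compl, Fintype.card_fin, hcard]
    rw [Fintype.card_equiv (Fintype.equivOfCardEq (h1.trans h2.symm)),
      Fintype.card_equiv (Fintype.equivOfCardEq (h3.trans h4.symm)), h1, h3]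
  · rw [if_neg hcard, Fintype.card_eq_zero_iff]
    constructor
    rintro ⟨σ, hσ⟩
    exact hcard (by rw [← hσ, Finset.card_image_of_injective _ σ.injective])



lemma symm_mem_iff_mem_image {d : ℕ} (σ : Equiv.Perm (Fin d)) (A : Finset (Fin d)) (i : Fin d) :
    σ.symm i ∈ A ↔ i ∈ A.image ⇑σ := by
  constructor
  · intro h
    exact Finset.mem_image.mpr ⟨σ.symm i, h, σ.apply_symm_apply i⟩
  · intro h
    obtain ⟨a, ha, heq⟩ := Finset.mem_image.mp h
    have : a = σ.symm i := by rw [← heq, σ.symm_apply_apply]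
    rwa [← this]

lemma card_core {d N : ℕ} (A : Finset (Fin d)) (x : Fin d → Fin N) :
    Fintype.card {σg : Equiv.Perm (Fin d) × (Fin d → Pairs N) //
        ∀ i, (if σg.1.symm i ∈ A then (σg.2 i).val.2 else (σg.2 i).val.1) = x i}
      = ∑ B : Finset (Fin d),
          (if B.card = A.card then Nat.factorial A.card * Nat.factorial (d - A.card) else 0)
            * ∏ i, (if i ∈ B then (x i).val else N - 1 - (x i).val) := by
  classical
  -- decompose according to the image `B = A.image σ`
  have e0 := (Equiv.sigmaFiberEquiv
    (fun q : {σg : Equiv.Perm (Fin d) × (Fin d → Pairs N) //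
        ∀ i, (if σg.1.symm i ∈ A then (σg.2 i).val.2 else (σg.2 i).val.1) = x i} =>
      A.image ⇑(q.val.1))).symm
  rw [Fintype.card_congr e0, Fintype.card_sigma]
  apply Finset.sum_congr rfl
  intro B _
  have efib : {q : {σg : Equiv.Perm (Fin d) × (Fin d → Pairs N) //
        ∀ i, (if σg.1.symm i ∈ A then (σg.2 i).val.2 else (σg.2 i).val.1) = x i} //
        A.image ⇑(q.val.1) = B} ≃
      ({σ : Equiv.Perm (Fin d) // A.image ⇑σ = B} ×
       {g : Fin d → Pairs N // ∀ i, (if i ∈ B then (g i).val.2 else (g i).val.1) = x i}) :=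
    { toFun := fun q =>
        (⟨q.val.val.1, q.prop⟩,
         ⟨q.val.val.2, fun i => by
            have h := q.val.prop i
            have hiff : (q.val.val.1.symm i ∈ A) ↔ (i ∈ B) := by
              rw [symm_mem_iff_mem_image, q.prop]
            rwa [if_congr hiff rfl rfl] at h⟩),
      invFun := fun sg =>
        ⟨⟨(sg.1.val, sg.2.val), fun i => by
            have h := sg.2.prop i
            have hiff : (sg.1.val.symm i ∈ A) ↔ (i ∈ B) := by
              rw [symm_mem_iff_mem_image, sg.1.prop]
            rwa [if_congr hiff rfl rfl]⟩, sg.1.prop⟩,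
      left_inv := by rintro ⟨⟨⟨σ, g⟩, hc⟩, hB⟩; rfl,
      right_inv := by rintro ⟨⟨σ, hσ⟩, ⟨g, hg⟩⟩; rfl }
  rw [Fintype.card_congr efib, Fintype.card_prod, card_perm_image A B, card_gmaps B x]


end CopiesAux

/-- If a finite poset `P` has a unique maximal and a unique minimal element, then there
exist positive integers `m` and `t` such that the family of copies of `P` in the grid
`[2|P|]^m` (modelled as `Fin m → Fin (2 * |P|)` with the componentwise order) contains a
`t`-partition: there is a weight function `w` on subsets, supported on copies of `P`,
such that every element has total weight exactly `t`. -/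
theorem copies_contain_t_partition (P : Type*) [PartialOrder P] [Fintype P]
    (hmax : ∃! x : P, IsMax x) (hmin : ∃! x : P, IsMin x) :
    ∃ m t : ℕ, 0 < m ∧ 0 < t ∧
      ∃ w : Finset (Fin m → Fin (2 * Fintype.card P)) → ℕ,
        (∀ F, w F ≠ 0 → IsCopy P (↑F : Set (Fin m → Fin (2 * Fintype.card P)))) ∧
        ∀ x : Fin m → Fin (2 * Fintype.card P),
          ∑ F ∈ Finset.univ.filter (fun F => x ∈ F), w F = t := by
  classical
  set n := Fintype.card P with hn
  set d := 2*n^4 with hd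
  obtain ⟨b, hb⟩ := CopiesAux.exists_bot hmin
  obtain ⟨tp, htp⟩ := CopiesAux.exists_top hmax
  obtain ⟨rk, hrk⟩ := CopiesAux.exists_rank (P := P)
  have hn1 : 1 ≤ n := by rw [hn]; exact Fintype.card_pos_iff.mpr ⟨b⟩
  have hn4 : n ≤ n^4 := Nat.le_self_pow (by norm_num) n
  have hnd : n ≤ d := by omega
  have hd1 : 1 ≤ d := by omega
  have hpow : 0 < 2^d := pow_pos (by norm_num) d
  have hbound : n * (n * d.choose (d/2)) ≤ 2^d := by
    have h := CopiesAux.central_window_bound n hn1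
    rw [← hd] at h
    calc n * (n * d.choose (d/2)) = n^2 * d.choose (d/2) := by ring
      _ ≤ 2^d := h
  -- the level functions
  set Lfun : Fin (2^d) → P → ℕ :=
    (fun s p => CopiesAux.Vc n d (s.val + 2^d * (rk p).val)) with hLfun
  have hrange : ∀ (s : Fin (2^d)) (p : P), s.val + 2^d * (rk p).val < n * 2^d := by
    intro s p
    have h2 : (rk p).val + 1 ≤ n := (rk p).isLt
    have h1 : s.val < 2^d := s.isLt
    calc s.val + 2^d * (rk p).val < 2^d + 2^d * (rk p).val := by omega
      _ = 2^d * ((rk p).val + 1) := by ring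
      _ ≤ 2^d * n := Nat.mul_le_mul_left _ h2
      _ = n * 2^d := mul_comm _ _
  have hgap : ∀ s : Fin (2^d), ∀ p q : P, p < q → Lfun s p + n ≤ Lfun s q := by
    intro s p q hpq
    have hab := hrk p q hpq
    rw [Fin.lt_def] at hab
    have hbn : (rk q).val < n := (rk q).isLt
    have hs1 : s.val < 2^d := s.isLt
    have hstep : CopiesAux.Vc n d (s.val + 2^d * (rk p).val) + n
        ≤ CopiesAux.Vc n d (s.val + 2^d * (rk p).val + 2^d) := by
      apply CopiesAux.Vc_gap n d _ hbound
      have hexp : 2^d * ((rk p).val + 2) = 2^d * (rk p).val + 2^d + 2^d := by ring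
      calc s.val + 2^d * (rk p).val + 2^d < 2^d * ((rk p).val + 2) := by omega
        _ ≤ 2^d * n := Nat.mul_le_mul_left _ (by omega)
        _ = n * 2^d := mul_comm _ _
    have hmono2 : CopiesAux.Vc n d (s.val + 2^d * (rk p).val + 2^d)
        ≤ CopiesAux.Vc n d (s.val + 2^d * (rk q).val) := by
      apply CopiesAux.Vc_mono
      have h3 : 2^d * ((rk p).val + 1) ≤ 2^d * (rk q).val := Nat.mul_le_mul_left _ (by omega)
      calc s.val + 2^d * (rk p).val + 2^d = s.val + 2^d * ((rk p).val + 1) := by ring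
        _ ≤ s.val + 2^d * (rk q).val := by omega
    simp only [hLfun]
    omega
  have hLd : ∀ (s : Fin (2^d)) (p : P), Lfun s p ≤ d := fun s p => CopiesAux.Vc_le n d _
  have hPhiE : ∀ s : Fin (2^d), ∃ Φ : P → Finset (Fin d),
      (∀ p, (Φ p).card = Lfun s p) ∧ (∀ p q, Φ p ⊆ Φ q ↔ p ≤ q) :=
    fun s => CopiesAux.exists_Phi n hn.symm rk hrk b tp hb htp d hnd (Lfun s)
      (fun p q h => hgap s p q h) (hLd s)
  choose Φ hΦcard hΦsub using hPhiE
  -- fiber counts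
  have hfiber : ∀ ℓ : ℕ, ℓ ≤ d →
      ((univ : Finset (Fin (2^d) × P)).filter (fun sp => (Φ sp.1 sp.2).card = ℓ)).card
        = n * d.choose ℓ := by
    intro ℓ hℓ
    rw [← CopiesAux.Vc_fiber_card n d ℓ hℓ]
    apply Finset.card_bij (fun sp _ => sp.1.val + 2^d * (rk sp.2).val)
    · intro sp hsp
      rw [mem_filter] at hsp
      have hc := hsp.2
      rw [hΦcard sp.1 sp.2] at hc
      simp only [hLfun] at hc
      rw [mem_filter, Finset.mem_range]
      exact ⟨hrange sp.1 sp.2, hc⟩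
    · intro sp _ sp' _ heq
      have e1 : ∀ (u : Fin (2^d)) (p : P), (u.val + 2^d * (rk p).val) % 2^d = u.val := by
        intro u p
        rw [Nat.add_mul_mod_self_left, Nat.mod_eq_of_lt u.isLt]
      have e2 : ∀ (u : Fin (2^d)) (p : P), (u.val + 2^d * (rk p).val) / 2^d = (rk p).val := by
        intro u p
        rw [Nat.add_mul_div_left _ _ hpow, Nat.div_eq_of_lt u.isLt, Nat.zero_add]
      have hs : sp.1.val = sp'.1.val := by
        have := congrArg (· % 2^d) heq
        simpa [e1] using this
      have hr : (rk sp.2).val = (rk sp'.2).val := by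
        have := congrArg (· / 2^d) heq
        simpa [e2] using this
      have h1 : sp.1 = sp'.1 := Fin.ext hs
      have h2 : sp.2 = sp'.2 := rk.injective (Fin.ext hr)
      exact Prod.ext h1 h2
    · intro k hk
      rw [mem_filter, Finset.mem_range] at hk
      have hdiv : k / 2^d < n := by
        apply (Nat.div_lt_iff_lt_mul hpow).mpr
        rw [mul_comm] at hk ⊢
        exact hk.1
      refine ⟨(⟨k % 2^d, Nat.mod_lt _ hpow⟩, rk.symm ⟨k / 2^d, hdiv⟩), ?_, ?_⟩
      · rw [mem_filter]
        refine ⟨mem_univ _, ?_⟩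
        rw [hΦcard]
        simp only [hLfun, Equiv.apply_symm_apply]
        show CopiesAux.Vc n d (k % 2^d + 2^d * (k / 2^d)) = ℓ
        rw [Nat.mod_add_div]
        exact hk.2
      · simp only [Equiv.apply_symm_apply]
        show k % 2^d + 2^d * (k / 2^d) = k
        rw [Nat.mod_add_div]
  -- the copies in the grid
  set emb : (Fin (2^d) × (Equiv.Perm (Fin d) × (Fin d → CopiesAux.Pairs (2*n)))) → P
      → (Fin d → Fin (2*n)) :=
    (fun θ p i => if θ.2.1.symm i ∈ Φ θ.1 p then (θ.2.2 i).val.2 else (θ.2.2 i).val.1) with hemb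
  have hmono : ∀ θ (p q : P), emb θ p ≤ emb θ q ↔ p ≤ q := by
    intro θ p q
    rw [← hΦsub θ.1 p q]
    constructor
    · intro hle j hj
      by_contra hjq
      have h := hle (θ.2.1 j)
      simp only [hemb, Equiv.symm_apply_apply] at h
      rw [if_pos hj, if_neg hjq] at h
      exact absurd h (not_le.mpr (θ.2.2 (θ.2.1 j)).prop)
    · intro hsub i
      simp only [hemb]
      by_cases h1 : θ.2.1.symm i ∈ Φ θ.1 p
      · rw [if_pos h1, if_pos (hsub h1)]
      · by_cases h2 : θ.2.1.symm i ∈ Φ θ.1 q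
        · rw [if_neg h1, if_pos h2]
          exact le_of_lt (θ.2.2 i).prop
        · rw [if_neg h1, if_neg h2]
  have hinj : ∀ θ, Function.Injective (emb θ) := by
    intro θ p q heq
    exact le_antisymm ((hmono θ p q).mp (le_of_eq heq)) ((hmono θ q p).mp (le_of_eq heq.symm))
  set copyset : (Fin (2^d) × (Equiv.Perm (Fin d) × (Fin d → CopiesAux.Pairs (2*n))))
      → Finset (Fin d → Fin (2*n)) := (fun θ => univ.image (emb θ)) with hcopy
  set w : Finset (Fin d → Fin (2*n)) → ℕ :=
    (fun F => (univ.filter (fun θ => copyset θ = F)).card) with hw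
  have ht0 : 0 < n * Nat.factorial d * (2*n-1)^d := by
    apply Nat.mul_pos (Nat.mul_pos (by omega) (Nat.factorial_pos d))
    exact pow_pos (by omega) d
  refine ⟨d, n * Nat.factorial d * (2*n-1)^d, by omega, ht0, w, ?_, ?_⟩
  · -- support condition
    intro F hF
    simp only [hw] at hF
    obtain ⟨θ, hθ⟩ := Finset.card_pos.mp (Nat.pos_of_ne_zero hF)
    rw [mem_filter] at hθ
    have hcs : copyset θ = F := hθ.2
    let f : P → (↑F : Set (Fin d → Fin (2*n))) := fun p =>
      ⟨emb θ p, by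
        rw [Finset.mem_coe, ← hcs]
        simp only [hcopy]
        exact Finset.mem_image_of_mem _ (mem_univ p)⟩
    have hfbij : Function.Bijective f := by
      constructor
      · intro p q hpq
        exact hinj θ (congrArg Subtype.val hpq)
      · rintro ⟨y, hy⟩
        have hy' : y ∈ F := Finset.mem_coe.mp hy
        rw [← hcs] at hy'
        simp only [hcopy] at hy'
        obtain ⟨p, _, hp⟩ := Finset.mem_image.mp hy'
        exact ⟨p, Subtype.ext hp⟩
    exact ⟨{ toEquiv := Equiv.ofBijective f hfbij,
             map_rel_iff' := by
               intro p q
               show f p ≤ f q ↔ p ≤ q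
               rw [Subtype.mk_le_mk]
               exact hmono θ p q }⟩
  · -- the t-partition property
    intro x
    have hmapsto : ∀ θ ∈ univ.filter (fun θ => x ∈ copyset θ),
        copyset θ ∈ univ.filter (fun F => x ∈ F) := by
      intro θ hθ
      rw [mem_filter] at hθ ⊢
      exact ⟨mem_univ _, hθ.2⟩
    have hstepA : ∑ F ∈ univ.filter (fun F => x ∈ F), w F
        = (univ.filter (fun θ => x ∈ copyset θ)).card := by
      rw [Finset.card_eq_sum_card_fiberwise hmapsto]
      apply Finset.sum_congr rfl
      intro F hF
      rw [mem_filter] at hF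
      simp only [hw]
      congr 1
      rw [Finset.filter_filter]
      ext θ
      simp only [Finset.mem_filter, mem_univ, true_and]
      exact ⟨fun h => ⟨by rw [h]; exact hF.2, h⟩, fun h => h.2⟩
    rw [hstepA, ← Fintype.card_subtype]
    have eB : {θp : (Fin (2^d) × (Equiv.Perm (Fin d) × (Fin d → CopiesAux.Pairs (2*n)))) × P //
        emb θp.1 θp.2 = x} ≃ {θ // x ∈ copyset θ} := by
      apply Equiv.ofBijective (fun q => ⟨q.val.1, by
        simp only [hcopy]
        exact Finset.mem_image.mpr ⟨q.val.2, mem_univ _, q.prop⟩⟩)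
      constructor
      · rintro ⟨⟨θ, p⟩, hp⟩ ⟨⟨θ', p'⟩, hp'⟩ heq
        have hθθ : θ = θ' := congrArg Subtype.val heq
        subst hθθ
        have hpp : p = p' := hinj θ (hp.trans hp'.symm)
        subst hpp
        rfl
      · rintro ⟨θ, hθ⟩
        simp only [hcopy] at hθ
        obtain ⟨p, _, hp⟩ := Finset.mem_image.mp hθ
        exact ⟨⟨(θ, p), hp⟩, Subtype.ext rfl⟩
    rw [← Fintype.card_congr eB]
    have eC : {θp : (Fin (2^d) × (Equiv.Perm (Fin d) × (Fin d → CopiesAux.Pairs (2*n)))) × P //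
        emb θp.1 θp.2 = x}
        ≃ Σ sp : Fin (2^d) × P, {σg : Equiv.Perm (Fin d) × (Fin d → CopiesAux.Pairs (2*n)) //
            ∀ i, (if σg.1.symm i ∈ Φ sp.1 sp.2 then (σg.2 i).val.2 else (σg.2 i).val.1) = x i} :=
      { toFun := fun q => ⟨(q.val.1.1, q.val.2), ⟨q.val.1.2, fun i => by
          have h := congrFun q.prop i
          simpa [hemb] using h⟩⟩,
        invFun := fun sq => ⟨((sq.1.1, sq.2.val), sq.1.2), by
          funext i
          have h := sq.2.prop i
          simpa [hemb] using h⟩,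
        left_inv := by rintro ⟨⟨⟨s, σg⟩, p⟩, hq⟩; rfl,
        right_inv := by rintro ⟨⟨s, p⟩, ⟨σg, hs⟩⟩; rfl }
    rw [Fintype.card_congr eC, Fintype.card_sigma]
    calc ∑ sp : Fin (2^d) × P, Fintype.card
          {σg : Equiv.Perm (Fin d) × (Fin d → CopiesAux.Pairs (2*n)) //
            ∀ i, (if σg.1.symm i ∈ Φ sp.1 sp.2 then (σg.2 i).val.2 else (σg.2 i).val.1) = x i}
        = ∑ sp : Fin (2^d) × P, ∑ B : Finset (Fin d),
            (if B.card = (Φ sp.1 sp.2).card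
              then Nat.factorial (Φ sp.1 sp.2).card * Nat.factorial (d - (Φ sp.1 sp.2).card)
              else 0)
              * ∏ i, (if i ∈ B then (x i).val else 2*n - 1 - (x i).val) := by
          apply Finset.sum_congr rfl
          intro sp _
          exact CopiesAux.card_core (Φ sp.1 sp.2) x
      _ = ∑ B : Finset (Fin d), ∑ sp : Fin (2^d) × P,
            (if B.card = (Φ sp.1 sp.2).card
              then Nat.factorial (Φ sp.1 sp.2).card * Nat.factorial (d - (Φ sp.1 sp.2).card)
              else 0)
              * ∏ i, (if i ∈ B then (x i).val else 2*n - 1 - (x i).val) := Finset.sum_comm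
      _ = ∑ B : Finset (Fin d), (n * d.choose B.card)
            * (Nat.factorial B.card * Nat.factorial (d - B.card))
            * ∏ i, (if i ∈ B then (x i).val else 2*n - 1 - (x i).val) := by
          apply Finset.sum_congr rfl
          intro B _
          rw [← Finset.sum_mul]
          congr 1
          have hrw : ∀ sp : Fin (2^d) × P,
              (if B.card = (Φ sp.1 sp.2).card
                then Nat.factorial (Φ sp.1 sp.2).card * Nat.factorial (d - (Φ sp.1 sp.2).card)
                else 0)
              = (if (Φ sp.1 sp.2).card = B.card then 1 else 0)
                  * (Nat.factorial B.card * Nat.factorial (d - B.card)) := by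
            intro sp
            by_cases h : B.card = (Φ sp.1 sp.2).card
            · rw [if_pos h, if_pos h.symm, one_mul, h]
            · rw [if_neg h, if_neg (fun hh => h hh.symm), zero_mul]
          rw [Finset.sum_congr rfl (fun sp _ => hrw sp), ← Finset.sum_mul]
          congr 1
          have hsb : ∑ sp : Fin (2^d) × P, (if (Φ sp.1 sp.2).card = B.card then 1 else 0)
              = ((univ : Finset (Fin (2^d) × P)).filter
                  (fun sp => (Φ sp.1 sp.2).card = B.card)).card := by
            rw [Finset.sum_boole]
            simp
          rw [hsb]
          apply hfiber B.card
          have h1 := Finset.card_le_univ B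
          rwa [Fintype.card_fin] at h1
      _ = ∑ B : Finset (Fin d), n * Nat.factorial d
            * ∏ i, (if i ∈ B then (x i).val else 2*n - 1 - (x i).val) := by
          apply Finset.sum_congr rfl
          intro B _
          congr 1
          have hBd : B.card ≤ d := by
            have h1 := Finset.card_le_univ B
            rwa [Fintype.card_fin] at h1
          calc n * d.choose B.card * (Nat.factorial B.card * Nat.factorial (d - B.card))
              = n * (d.choose B.card * Nat.factorial B.card * Nat.factorial (d - B.card)) := by
                ring
            _ = n * Nat.factorial d := by
                rw [Nat.choose_mul_factorial_mul_factorial hBd]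
      _ = n * Nat.factorial d
            * ∑ B : Finset (Fin d), ∏ i, (if i ∈ B then (x i).val else 2*n - 1 - (x i).val) := by
          rw [← Finset.mul_sum]
      _ = n * Nat.factorial d * (2*n-1)^d := by
          congr 1
          have hsplit : ∀ B : Finset (Fin d),
              (∏ i, (if i ∈ B then (x i).val else 2*n - 1 - (x i).val))
              = (∏ i ∈ B, (x i).val) * ∏ i ∈ univ \ B, (2*n - 1 - (x i).val) := by
            intro B
            calc (∏ i, (if i ∈ B then (x i).val else 2*n - 1 - (x i).val))
                = ∏ i ∈ univ, B.piecewise (fun i => (x i).val)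
                    (fun i => 2*n - 1 - (x i).val) i :=
                  Finset.prod_congr rfl (fun i _ => by simp [Finset.piecewise])
              _ = (∏ i ∈ univ ∩ B, (x i).val) * ∏ i ∈ univ \ B, (2*n - 1 - (x i).val) :=
                  Finset.prod_piecewise univ B _ _
              _ = (∏ i ∈ B, (x i).val) * ∏ i ∈ univ \ B, (2*n - 1 - (x i).val) := by
                  rw [Finset.univ_inter]
          rw [Finset.sum_congr rfl (fun B _ => hsplit B)]
          have hps : (univ : Finset (Finset (Fin d))) = (univ : Finset (Fin d)).powerset := by
            rw [Finset.powerset_univ]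
          rw [hps, ← Finset.prod_add (fun i => (x i).val) (fun i => 2*n - 1 - (x i).val) univ]
          have hconst : ∀ i : Fin d, (x i).val + (2*n - 1 - (x i).val) = 2*n - 1 := by
            intro i
            have := (x i).isLt
            omega
          rw [Finset.prod_congr rfl (fun i _ => hconst i), Finset.prod_const,
            Finset.card_univ, Fintype.card_fin]
end

section
/- Let P be a finite poset with a unique maximal element and a unique minimal element, and let t be a positive integer. Then there exists a positive integer m such that the family of copies of P in the grid [2|P|]^m contains a (1 mod t)-partition; that is, there exists a weight function w assigning a natural number to each copy of P in [2|P|]^m such that for every element x of [2|P|]^m, the sum of w(F) over all copies F of P containing x is congruent to 1 modulo t. -/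
open Finset
set_option linter.unusedSectionVars false
open scoped Classical
open Finset

section Machinery

variable {X : Type*} [Fintype X] [DecidableEq X]

private def cov (w : Finset X → ℕ) (x : X) : ℕ :=
  ∑ F ∈ Finset.univ.filter (fun F => x ∈ F), w F

private lemma cov_add (w₁ w₂ : Finset X → ℕ) (x : X) :
    cov (fun F => w₁ F + w₂ F) x = cov w₁ x + cov w₂ x :=
  Finset.sum_add_distrib

private lemma cov_sum {ι : Type*} (s : Finset ι) (w : ι → Finset X → ℕ) (x : X) :
    cov (fun F => ∑ i ∈ s, w i F) x = ∑ i ∈ s, cov (w i) x :=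
  Finset.sum_comm

private lemma cov_single (k : ℕ) (C₀ : Finset X) (x : X) :
    cov (fun F => if F = C₀ then k else 0) x = if x ∈ C₀ then k else 0 := by
  unfold cov
  rw [Finset.sum_ite_eq' (Finset.univ.filter (fun F => x ∈ F)) C₀ (fun _ => k)]
  simp [Finset.mem_filter]

variable (t : ℕ) (Copy : Finset X → Prop)

private def Conn (u v : X) : Prop :=
  ∀ c : ZMod t, ∃ w : Finset X → ℕ, (∀ F, w F ≠ 0 → Copy F) ∧
    ∀ x : X, ((cov w x : ℕ) : ZMod t)
      = c * ((if x = u then 1 else 0) - (if x = v then 1 else 0))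

private lemma conn_refl (u : X) : Conn t Copy u u := by
  intro c
  refine ⟨fun _ => 0, by simp, fun x => ?_⟩
  simp [cov]

private lemma conn_trans {u v z : X} (h₁ : Conn t Copy u v) (h₂ : Conn t Copy v z) :
    Conn t Copy u z := by
  intro c
  obtain ⟨w₁, hc₁, hr₁⟩ := h₁ c
  obtain ⟨w₂, hc₂, hr₂⟩ := h₂ c
  refine ⟨fun F => w₁ F + w₂ F, ?_, fun x => ?_⟩
  · intro F hF
    by_cases h : w₁ F = 0
    · exact hc₂ F (by simpa [h] using hF)
    · exact hc₁ F h
  · rw [cov_add]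
    push_cast
    rw [hr₁ x, hr₂ x]
    ring

private lemma conn_link [NeZero t] {S : Finset X} {u v : X} (hu : u ∉ S) (hv : v ∉ S)
    (hA : Copy (insert u S)) (hB : Copy (insert v S)) : Conn t Copy u v := by
  intro c
  refine ⟨fun F => (if F = insert u S then c.val else 0)
      + (if F = insert v S then c.val * (t - 1) else 0), ?_, fun x => ?_⟩
  · intro F hF
    by_cases h1 : F = insert u S
    · exact h1 ▸ hA
    · by_cases h2 : F = insert v S
      · exact h2 ▸ hB
      · simp [h1, h2] at hF
  · rw [cov_add, cov_single, cov_single]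
    have hc : ((c.val : ℕ) : ZMod t) = c := ZMod.natCast_rightInverse c
    have ht1 : ((t - 1 : ℕ) : ZMod t) = -1 := by
      have h1 : 1 ≤ t := Nat.one_le_iff_ne_zero.mpr (NeZero.ne t)
      push_cast [Nat.cast_sub h1]
      simp
    push_cast [ht1, hc]
    by_cases hxS : x ∈ S
    · have hxu : ¬ x = u := fun h => hu (h ▸ hxS)
      have hxv : ¬ x = v := fun h => hv (h ▸ hxS)
      rw [if_pos (Finset.mem_insert.mpr (Or.inr hxS)),
        if_pos (Finset.mem_insert.mpr (Or.inr hxS)), if_neg hxu, if_neg hxv]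
      ring
    · by_cases hxu : x = u
      · subst hxu
        by_cases hxv : x = v
        · rw [if_pos (Finset.mem_insert_self x S),
            if_pos (Finset.mem_insert.mpr (Or.inl hxv)), if_pos rfl, if_pos hxv]
          ring
        · rw [if_pos (Finset.mem_insert_self x S),
            if_neg (fun h => by rcases Finset.mem_insert.mp h with h | h; exact hxv h; exact hxS h),
            if_pos rfl, if_neg hxv]
          ring
      · by_cases hxv : x = v
        · rw [if_neg (fun h => by rcases Finset.mem_insert.mp h with h | h; exact hxu h; exact hxS h),
            if_pos (Finset.mem_insert.mpr (Or.inl hxv)), if_neg hxu, if_pos hxv]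
          ring
        · rw [if_neg (fun h => by rcases Finset.mem_insert.mp h with h | h; exact hxu h; exact hxS h),
            if_neg (fun h => by rcases Finset.mem_insert.mp h with h | h; exact hxv h; exact hxS h),
            if_neg hxu, if_neg hxv]
          ring

private lemma exists_good_weight [NeZero t] (x₀ : X) (C₀ : Finset X) (hC₀ : Copy C₀)
    (k : ℕ) (hk : ((Fintype.card X : ℕ) : ZMod t) = (k : ZMod t) * (C₀.card : ZMod t))
    (hconn : ∀ x : X, Conn t Copy x x₀) :
    ∃ w : Finset X → ℕ, (∀ F, w F ≠ 0 → Copy F) ∧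
      ∀ x : X, ((cov w x : ℕ) : ZMod t) = 1 := by
  classical
  choose wc hwcopy hwreal using fun y : X =>
    hconn y (1 - (k : ZMod t) * (if y ∈ C₀ then 1 else 0))
  have e2 : ∑ y ∈ Finset.univ, (1 - (k : ZMod t) * (if y ∈ C₀ then 1 else 0)) = 0 := by
    rw [Finset.sum_sub_distrib, Finset.sum_const, Finset.card_univ, ← Finset.mul_sum]
    have e3 : ∑ y ∈ Finset.univ, (if y ∈ C₀ then (1 : ZMod t) else 0) = (C₀.card : ZMod t) := by
      rw [Finset.sum_ite_mem, Finset.univ_inter]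
      simp
    rw [e3, nsmul_eq_mul, mul_one, hk]
    ring
  refine ⟨fun F => (if F = C₀ then k else 0) + ∑ y ∈ Finset.univ, wc y F, ?_, fun x => ?_⟩
  · intro F hF
    by_cases h1 : F = C₀
    · exact h1 ▸ hC₀
    · simp only [h1, if_false, zero_add] at hF
      obtain ⟨y, _, hy⟩ := Finset.exists_ne_zero_of_sum_ne_zero hF
      exact hwcopy y F hy
  · rw [cov_add, cov_single, cov_sum]
    push_cast
    rw [Finset.sum_congr rfl (fun y _ => hwreal y x)]
    simp only [mul_sub]
    rw [Finset.sum_sub_distrib]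
    have e4 : ∑ y ∈ Finset.univ,
        (1 - (k : ZMod t) * (if y ∈ C₀ then 1 else 0)) * (if x = y then 1 else 0)
        = 1 - (if x ∈ C₀ then (k : ZMod t) else 0) := by
      simp only [mul_ite, mul_one, mul_zero]
      rw [Finset.sum_ite_eq Finset.univ x (fun y => 1 - (if y ∈ C₀ then (k : ZMod t) else 0))]
      simp
    have e5 : ∑ y ∈ Finset.univ,
        (1 - (k : ZMod t) * (if y ∈ C₀ then 1 else 0)) * (if x = x₀ then 1 else 0)
        = 0 := by
      rw [← Finset.sum_mul, e2, zero_mul]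
    rw [e4, e5]
    by_cases h : x ∈ C₀ <;> simp [h]

end Machinery

section Grid

variable {P : Type*} [PartialOrder P] [Fintype P]

private lemma isCopy_image {d N : ℕ} (f : P → (Fin d → Fin N))
    (hf : ∀ a b, f a ≤ f b ↔ a ≤ b) :
    IsCopy P ((Finset.univ.image f : Finset (Fin d → Fin N)) : Set (Fin d → Fin N)) := by
  have hinj : Function.Injective f := fun a b h =>
    le_antisymm ((hf a b).mp h.le) ((hf b a).mp h.ge)
  have hmem : ∀ p : P, f p ∈ ((Finset.univ.image f : Finset (Fin d → Fin N)) : Set (Fin d → Fin N)) := by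
    intro p
    simp only [Finset.coe_image, Finset.coe_univ, Set.image_univ, Set.mem_range]
    exact ⟨p, rfl⟩
  have hbij : Function.Bijective (fun p : P =>
      (⟨f p, hmem p⟩ : ((Finset.univ.image f : Finset (Fin d → Fin N)) : Set (Fin d → Fin N)))) := by
    constructor
    · intro a b hab
      exact hinj (congrArg Subtype.val hab)
    · rintro ⟨x, hx⟩
      simp only [Finset.coe_image, Finset.coe_univ, Set.image_univ, Set.mem_range] at hx
      obtain ⟨p, rfl⟩ := hx
      exact ⟨p, rfl⟩
  exact ⟨{ toEquiv := Equiv.ofBijective _ hbij,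
           map_rel_iff' := by
             intro a b
             simpa [Equiv.ofBijective, Subtype.mk_le_mk] using hf a b }⟩

open Classical in
private noncomputable def bpt {d N : ℕ} (p₀ : P) (e : P → Fin d) (a : Fin d → ℕ)
    (ha : ∀ i, a i < N) (hae : ∀ q, q ≠ p₀ → a (e q) + 1 < N) (q : P) : Fin d → Fin N :=
  fun i => if h : ∃ q', q' ≤ q ∧ q' ≠ p₀ ∧ e q' = i
    then ⟨a i + 1, by obtain ⟨q', _, hq2, hq3⟩ := h; exact hq3 ▸ hae q' hq2⟩
    else ⟨a i, ha i⟩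

private lemma bpt_val_pos {d N : ℕ} (p₀ : P) (e : P → Fin d) (a : Fin d → ℕ)
    (ha : ∀ i, a i < N) (hae : ∀ q, q ≠ p₀ → a (e q) + 1 < N) (q : P) (i : Fin d)
    (h : ∃ q', q' ≤ q ∧ q' ≠ p₀ ∧ e q' = i) :
    ((bpt p₀ e a ha hae q i : Fin N) : ℕ) = a i + 1 := by
  unfold bpt
  rw [dif_pos h]

private lemma bpt_val_neg {d N : ℕ} (p₀ : P) (e : P → Fin d) (a : Fin d → ℕ)
    (ha : ∀ i, a i < N) (hae : ∀ q, q ≠ p₀ → a (e q) + 1 < N) (q : P) (i : Fin d)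
    (h : ¬ ∃ q', q' ≤ q ∧ q' ≠ p₀ ∧ e q' = i) :
    ((bpt p₀ e a ha hae q i : Fin N) : ℕ) = a i := by
  unfold bpt
  rw [dif_neg h]

private lemma bpt_val_le {d N : ℕ} (p₀ : P) (e : P → Fin d) (a : Fin d → ℕ)
    (ha : ∀ i, a i < N) (hae : ∀ q, q ≠ p₀ → a (e q) + 1 < N) (q : P) (i : Fin d) :
    a i ≤ ((bpt p₀ e a ha hae q i : Fin N) : ℕ) ∧
      ((bpt p₀ e a ha hae q i : Fin N) : ℕ) ≤ a i + 1 := by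
  classical
  by_cases h : ∃ q', q' ≤ q ∧ q' ≠ p₀ ∧ e q' = i
  · rw [bpt_val_pos p₀ e a ha hae q i h]; omega
  · rw [bpt_val_neg p₀ e a ha hae q i h]; omega

private lemma bpt_mono {d N : ℕ} (p₀ : P) (e : P → Fin d) (a : Fin d → ℕ)
    (ha : ∀ i, a i < N) (hae : ∀ q, q ≠ p₀ → a (e q) + 1 < N) {q q' : P} (hq : q ≤ q') :
    bpt p₀ e a ha hae q ≤ bpt p₀ e a ha hae q' := by
  classical
  intro i
  rw [Fin.le_def]
  by_cases h : ∃ q'', q'' ≤ q ∧ q'' ≠ p₀ ∧ e q'' = i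
  · obtain ⟨q'', h1, h2, h3⟩ := h
    rw [bpt_val_pos p₀ e a ha hae q i ⟨q'', h1, h2, h3⟩,
      bpt_val_pos p₀ e a ha hae q' i ⟨q'', h1.trans hq, h2, h3⟩]
  · rw [bpt_val_neg p₀ e a ha hae q i h]
    exact (bpt_val_le p₀ e a ha hae q' i).1

private lemma bpt_le_iff {d N : ℕ} (p₀ : P) (e : P → Fin d) (he : Function.Injective e)
    (a : Fin d → ℕ) (ha : ∀ i, a i < N) (hae : ∀ q, q ≠ p₀ → a (e q) + 1 < N)
    {q q' : P} (hq : q ≠ p₀) :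
    bpt p₀ e a ha hae q ≤ bpt p₀ e a ha hae q' ↔ q ≤ q' := by
  classical
  constructor
  · intro h
    have h1 := h (e q)
    rw [Fin.le_def, bpt_val_pos p₀ e a ha hae q (e q) ⟨q, le_refl q, hq, rfl⟩] at h1
    by_cases h2 : ∃ q'', q'' ≤ q' ∧ q'' ≠ p₀ ∧ e q'' = e q
    · obtain ⟨q'', hq1, _, hq3⟩ := h2
      exact (he hq3) ▸ hq1
    · rw [bpt_val_neg p₀ e a ha hae q' (e q) h2] at h1
      omega
  · exact fun h => bpt_mono p₀ e a ha hae h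

end Grid
-- continuation: conn_bottom / conn_top (to be concatenated after m1+m2)

section GridConn

variable {P : Type*} [PartialOrder P] [Fintype P]

private lemma inj_of_le_iff {d N : ℕ} (f : P → (Fin d → Fin N))
    (hf : ∀ a b, f a ≤ f b ↔ a ≤ b) : Function.Injective f := fun a b h =>
  le_antisymm ((hf a b).mp h.le) ((hf b a).mp h.ge)

/-- the copy with free bottom slot -/
private lemma botfam_le_iff {d N : ℕ} (p₀ : P) (hp₀ : ∀ q, p₀ ≤ q)
    (e : P → Fin d) (he : Function.Injective e) (a : Fin d → ℕ)
    (ha : ∀ i, a i < N) (hae : ∀ q, q ≠ p₀ → a (e q) + 1 < N)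
    (y : Fin d → Fin N) (hy : ∀ i, ((y i : Fin N) : ℕ) ≤ a i) :
    ∀ q q', ((if q = p₀ then y else bpt p₀ e a ha hae q)
      ≤ (if q' = p₀ then y else bpt p₀ e a ha hae q')) ↔ q ≤ q' := by
  intro q q'
  by_cases hq : q = p₀ <;> by_cases hq' : q' = p₀
  · rw [if_pos hq, if_pos hq']
    exact iff_of_true le_rfl ((hq.trans hq'.symm).le)
  · rw [if_pos hq, if_neg hq']
    refine iff_of_true (fun i => ?_) (hq.le.trans (hp₀ q'))
    rw [Fin.le_def]
    exact le_trans (hy i) (bpt_val_le p₀ e a ha hae q' i).1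
  · rw [if_neg hq, if_pos hq']
    refine iff_of_false (fun h => ?_) (fun h => hq (le_antisymm (h.trans hq'.le) (hp₀ q)))
    have h1 := h (e q)
    rw [Fin.le_def, bpt_val_pos p₀ e a ha hae q (e q) ⟨q, le_refl q, hq, rfl⟩] at h1
    have h2 := hy (e q)
    omega
  · rw [if_neg hq, if_neg hq']
    exact bpt_le_iff p₀ e he a ha hae hq

private lemma bottom_insert {d N : ℕ} (p₀ : P)
    (e : P → Fin d) (a : Fin d → ℕ)
    (ha : ∀ i, a i < N) (hae : ∀ q, q ≠ p₀ → a (e q) + 1 < N)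
    (y : Fin d → Fin N) :
    insert y ((Finset.univ.erase p₀).image (bpt p₀ e a ha hae))
      = Finset.univ.image (fun q => if q = p₀ then y else bpt p₀ e a ha hae q) := by
  classical
  conv_rhs => rw [← Finset.insert_erase (Finset.mem_univ p₀)]
  rw [Finset.image_insert, if_pos rfl]
  congr 1
  apply Finset.image_congr
  intro q hq
  exact (if_neg (Finset.ne_of_mem_erase (Finset.mem_coe.mp hq))).symm

private lemma bottom_not_mem {d N : ℕ} (p₀ : P)
    (e : P → Fin d) (a : Fin d → ℕ)
    (ha : ∀ i, a i < N) (hae : ∀ q, q ≠ p₀ → a (e q) + 1 < N)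
    (y : Fin d → Fin N) (hy : ∀ i, ((y i : Fin N) : ℕ) ≤ a i) :
    y ∉ (Finset.univ.erase p₀).image (bpt p₀ e a ha hae) := by
  intro hmem
  obtain ⟨q, hq, hqe⟩ := Finset.mem_image.mp hmem
  have hqp : q ≠ p₀ := Finset.ne_of_mem_erase hq
  have h1 : ((y (e q) : Fin N) : ℕ) = a (e q) + 1 := by
    rw [← hqe]
    exact bpt_val_pos p₀ e a ha hae q (e q) ⟨q, le_refl q, hqp, rfl⟩
  have h2 := hy (e q)
  omega

private lemma conn_bottom (t : ℕ) [NeZero t] {d N : ℕ} (p₀ : P) (hp₀ : ∀ q, p₀ ≤ q)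
    (e : P → Fin d) (he : Function.Injective e) (a : Fin d → ℕ)
    (ha : ∀ i, a i < N) (hae : ∀ q, q ≠ p₀ → a (e q) + 1 < N)
    (u v : Fin d → Fin N) (hu : ∀ i, ((u i : Fin N) : ℕ) ≤ a i)
    (hv : ∀ i, ((v i : Fin N) : ℕ) ≤ a i) :
    Conn t (fun F : Finset (Fin d → Fin N) => IsCopy P (↑F : Set (Fin d → Fin N))) u v := by
  apply conn_link t _ (bottom_not_mem p₀ e a ha hae u hu) (bottom_not_mem p₀ e a ha hae v hv)
  · rw [bottom_insert]
    exact isCopy_image _ (botfam_le_iff p₀ hp₀ e he a ha hae u hu)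
  · rw [bottom_insert]
    exact isCopy_image _ (botfam_le_iff p₀ hp₀ e he a ha hae v hv)

/-- the copy with free top slot -/
private lemma topfam_le_iff {d N : ℕ} (p₁ : P) (hp₁ : ∀ q, q ≤ p₁)
    (e : P → Fin d) (he : Function.Injective e) (a : Fin d → ℕ)
    (ha : ∀ i, a i < N) (hae : ∀ q, q ≠ p₁ → a (e q) + 1 < N)
    (z : Fin d → Fin N) (hz₁ : bpt p₁ e a ha hae p₁ ≤ z) (hz₂ : z ≠ bpt p₁ e a ha hae p₁) :
    ∀ q q', ((if q = p₁ then z else bpt p₁ e a ha hae q)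
      ≤ (if q' = p₁ then z else bpt p₁ e a ha hae q')) ↔ q ≤ q' := by
  intro q q'
  by_cases hq : q = p₁ <;> by_cases hq' : q' = p₁
  · rw [if_pos hq, if_pos hq']
    exact iff_of_true le_rfl ((hq.trans hq'.symm).le)
  · rw [if_pos hq, if_neg hq']
    refine iff_of_false (fun h => ?_) (fun h => hq' (le_antisymm (hp₁ q') (hq ▸ h)))
    exact hz₂ (le_antisymm (h.trans (bpt_mono p₁ e a ha hae (hp₁ q'))) hz₁)
  · rw [if_neg hq, if_pos hq']
    exact iff_of_true ((bpt_mono p₁ e a ha hae (hp₁ q)).trans hz₁) ((hp₁ q).trans hq'.ge)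
  · rw [if_neg hq, if_neg hq']
    exact bpt_le_iff p₁ e he a ha hae hq

private lemma top_insert {d N : ℕ} (p₁ : P)
    (e : P → Fin d) (a : Fin d → ℕ)
    (ha : ∀ i, a i < N) (hae : ∀ q, q ≠ p₁ → a (e q) + 1 < N)
    (z : Fin d → Fin N) :
    insert z ((Finset.univ.erase p₁).image (bpt p₁ e a ha hae))
      = Finset.univ.image (fun q => if q = p₁ then z else bpt p₁ e a ha hae q) := by
  classical
  conv_rhs => rw [← Finset.insert_erase (Finset.mem_univ p₁)]
  rw [Finset.image_insert, if_pos rfl]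
  congr 1
  apply Finset.image_congr
  intro q hq
  exact (if_neg (Finset.ne_of_mem_erase (Finset.mem_coe.mp hq))).symm

private lemma top_not_mem {d N : ℕ} (p₁ : P) (hp₁ : ∀ q, q ≤ p₁)
    (e : P → Fin d) (a : Fin d → ℕ)
    (ha : ∀ i, a i < N) (hae : ∀ q, q ≠ p₁ → a (e q) + 1 < N)
    (z : Fin d → Fin N) (hz₁ : bpt p₁ e a ha hae p₁ ≤ z) (hz₂ : z ≠ bpt p₁ e a ha hae p₁) :
    z ∉ (Finset.univ.erase p₁).image (bpt p₁ e a ha hae) := by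
  intro hmem
  obtain ⟨q, hq, hqe⟩ := Finset.mem_image.mp hmem
  apply hz₂
  have h1 : bpt p₁ e a ha hae q ≤ bpt p₁ e a ha hae p₁ := bpt_mono p₁ e a ha hae (hp₁ q)
  rw [hqe] at h1
  exact le_antisymm h1 hz₁

private lemma conn_top (t : ℕ) [NeZero t] {d N : ℕ} (p₁ : P) (hp₁ : ∀ q, q ≤ p₁)
    (e : P → Fin d) (he : Function.Injective e) (a : Fin d → ℕ)
    (ha : ∀ i, a i < N) (hae : ∀ q, q ≠ p₁ → a (e q) + 1 < N)
    (u v : Fin d → Fin N)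
    (hu₁ : bpt p₁ e a ha hae p₁ ≤ u) (hu₂ : u ≠ bpt p₁ e a ha hae p₁)
    (hv₁ : bpt p₁ e a ha hae p₁ ≤ v) (hv₂ : v ≠ bpt p₁ e a ha hae p₁) :
    Conn t (fun F : Finset (Fin d → Fin N) => IsCopy P (↑F : Set (Fin d → Fin N))) u v := by
  apply conn_link t _ (top_not_mem p₁ hp₁ e a ha hae u hu₁ hu₂)
    (top_not_mem p₁ hp₁ e a ha hae v hv₁ hv₂)
  · rw [top_insert]
    exact isCopy_image _ (topfam_le_iff p₁ hp₁ e he a ha hae u hu₁ hu₂)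
  · rw [top_insert]
    exact isCopy_image _ (topfam_le_iff p₁ hp₁ e he a ha hae v hv₁ hv₂)

end GridConn


/-- If a finite poset `P` has a unique maximal and a unique minimal element, and `t` is a
positive integer, then there exists a positive integer `m` such that the family of copies
of `P` in the grid `[2|P|]^m` (modelled as `Fin m → Fin (2 * |P|)` with the componentwise
order) contains a `(1 mod t)`-partition: there is a weight function `w` on subsets,
supported on copies of `P`, such that every element has total weight congruent to `1`
modulo `t`. -/
theorem copies_contain_one_mod_t_partition (P : Type*) [PartialOrder P] [Fintype P]
    (hmax : ∃! x : P, IsMax x) (hmin : ∃! x : P, IsMin x) (t : ℕ) (ht : 0 < t) :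
    ∃ m : ℕ, 0 < m ∧
      ∃ w : Finset (Fin m → Fin (2 * Fintype.card P)) → ℕ,
        (∀ F, w F ≠ 0 → IsCopy P (↑F : Set (Fin m → Fin (2 * Fintype.card P)))) ∧
        ∀ x : Fin m → Fin (2 * Fintype.card P),
          (∑ F ∈ Finset.univ.filter (fun F => x ∈ F), w F) ≡ 1 [MOD t] := by
  classical
  haveI : NeZero t := ⟨ht.ne'⟩
  obtain ⟨p₁, hp₁max, hp₁uniq⟩ := hmax
  obtain ⟨p₀, hp₀min, hp₀uniq⟩ := hmin
  haveI : Nonempty P := ⟨p₀⟩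
  set n := Fintype.card P with hn
  have hn1 : 1 ≤ n := Fintype.card_pos
  -- p₁ is the global maximum
  have hp₁ : ∀ q : P, q ≤ p₁ := by
    intro q
    obtain ⟨m', hm', hmax'⟩ : ∃ m ∈ Finset.univ.filter (fun y => q ≤ y),
        ∀ x ∈ Finset.univ.filter (fun y => q ≤ y), ¬ m < x := by
      obtain ⟨m, hm⟩ := Finset.exists_maximal
        (s := Finset.univ.filter (fun y => q ≤ y)) ⟨q, by simp⟩
      exact ⟨m, hm.1, fun x hx hlt => hlt.not_ge (hm.2 hx hlt.le)⟩
    have hismax : IsMax m' := by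
      intro y hy
      by_contra hnot
      have hne : m' ≠ y := fun h => hnot (le_of_eq h.symm)
      exact hmax' y (Finset.mem_filter.mpr
        ⟨Finset.mem_univ y, ((Finset.mem_filter.mp hm').2).trans hy⟩) (lt_of_le_of_ne hy hne)
    exact (hp₁uniq m' hismax) ▸ (Finset.mem_filter.mp hm').2
  -- p₀ is the global minimum
  have hp₀ : ∀ q : P, p₀ ≤ q := by
    intro q
    obtain ⟨m', hm', hmin'⟩ : ∃ m ∈ Finset.univ.filter (fun y => y ≤ q),
        ∀ x ∈ Finset.univ.filter (fun y => y ≤ q), ¬ x < m := by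
      obtain ⟨m, hm⟩ := Finset.exists_minimal
        (s := Finset.univ.filter (fun y => y ≤ q)) ⟨q, by simp⟩
      exact ⟨m, hm.1, fun x hx hlt => hlt.not_ge (hm.2 hx hlt.le)⟩
    have hismin : IsMin m' := by
      intro y hy
      by_contra hnot
      have hne : y ≠ m' := fun h => hnot (le_of_eq h.symm)
      exact hmin' y (Finset.mem_filter.mpr
        ⟨Finset.mem_univ y, hy.trans (Finset.mem_filter.mp hm').2⟩) (lt_of_le_of_ne hy hne)
    exact (hp₀uniq m' hismin) ▸ (Finset.mem_filter.mp hm').2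
  refine ⟨2 * n, by omega, ?_⟩
  -- the grid
  have hNpos : 0 < 2 * n := by omega
  set Copy : Finset (Fin (2 * n) → Fin (2 * n)) → Prop :=
    (fun F => IsCopy P (↑F : Set (Fin (2 * n) → Fin (2 * n)))) with hCopy
  let Mtop : Fin (2 * n) → Fin (2 * n) := fun _ => ⟨2 * n - 1, by omega⟩
  let onev : Fin (2 * n) → Fin (2 * n) := fun _ => ⟨1, by omega⟩
  let zerov : Fin (2 * n) → Fin (2 * n) := fun _ => ⟨0, by omega⟩
  -- injections into given coordinate sets
  have hostlemma : ∀ T : Finset (Fin (2 * n)), n ≤ T.card →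
      ∃ e : P → Fin (2 * n), Function.Injective e ∧ ∀ q, e q ∈ T := by
    intro T hT
    obtain ⟨T', hsub, hcard⟩ := Finset.exists_subset_card_eq hT
    have hcard' : Fintype.card P = Fintype.card {x // x ∈ T'} := by
      rw [Fintype.card_coe, hcard]
    obtain ⟨eqv⟩ := Fintype.card_eq.mp hcard'
    exact ⟨fun q => (eqv q : Fin (2 * n)), fun a b h => eqv.injective (Subtype.coe_injective h),
      fun q => hsub (eqv q).2⟩
  obtain ⟨e₀, he₀, -⟩ := hostlemma Finset.univ (by simp [Fintype.card_fin]; omega)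
  -- top-family with a = 0 and hosts e₀ ; basic facts
  have ha0 : ∀ i : Fin (2 * n), (fun _ : Fin (2 * n) => 0) i < 2 * n := fun _ => hNpos
  have hae0 : ∀ q : P, q ≠ p₁ → (fun _ : Fin (2 * n) => 0) (e₀ q) + 1 < 2 * n := by
    intro q hq
    have h2n : 2 ≤ n := by
      by_contra hcon
      have hle : Fintype.card P ≤ 1 := by omega
      haveI := Fintype.card_le_one_iff_subsingleton.mp hle
      exact hq (Subsingleton.elim q p₁)
    show 0 + 1 < 2 * n
    omega
  set Bstar : Fin (2 * n) → Fin (2 * n) :=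
    bpt p₁ e₀ (fun _ => 0) ha0 hae0 p₁ with hBstar
  have hBstar_le : ∀ i, ((Bstar i : Fin (2 * n)) : ℕ) ≤ 1 :=
    fun i => (bpt_val_le p₁ e₀ (fun _ => 0) ha0 hae0 p₁ i).2
  have hBstar_e₁ : ((Bstar (e₀ p₁) : Fin (2 * n)) : ℕ) = 0 := by
    apply bpt_val_neg
    rintro ⟨q', -, hne, heq⟩
    exact hne (he₀ heq)
  have hMtop_ge : Bstar ≤ Mtop := by
    intro i
    rw [Fin.le_def]
    have := hBstar_le i
    show _ ≤ 2 * n - 1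
    omega
  have hMtop_ne : Mtop ≠ Bstar := by
    intro h
    have := congrFun h (e₀ p₁)
    have hval : (2 * n - 1 : ℕ) = ((Bstar (e₀ p₁) : Fin (2 * n)) : ℕ) := congrArg Fin.val this
    omega
  have honev_ge : Bstar ≤ onev := by
    intro i
    rw [Fin.le_def]
    have := hBstar_le i
    show _ ≤ 1
    omega
  have honev_ne : onev ≠ Bstar := by
    intro h
    have := congrFun h (e₀ p₁)
    have hval : (1 : ℕ) = ((Bstar (e₀ p₁) : Fin (2 * n)) : ℕ) := congrArg Fin.val this
    omega
  -- step 2 : 0 connected to 1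
  have step2 : Conn t Copy zerov onev := by
    apply conn_bottom t p₀ hp₀ e₀ he₀ (fun _ => 1)
    · intro i
      show 1 < 2 * n
      omega
    · intro q hq
      have h2n : 2 ≤ n := by
        by_contra hcon
        have hle : Fintype.card P ≤ 1 := by omega
        haveI := Fintype.card_le_one_iff_subsingleton.mp hle
        exact hq (Subsingleton.elim q p₀)
      show 1 + 1 < 2 * n
      omega
    · intro i
      show (0 : ℕ) ≤ 1
      omega
    · intro i
      show (1 : ℕ) ≤ 1
      omega
  -- step 3 : 1 connected to Mtop
  have step3 : Conn t Copy onev Mtop :=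
    conn_top t p₁ hp₁ e₀ he₀ (fun _ => 0) ha0 hae0 onev Mtop
      honev_ge honev_ne hMtop_ge hMtop_ne
  -- full connectivity
  have hconn : ∀ x : Fin (2 * n) → Fin (2 * n), Conn t Copy x Mtop := by
    intro x
    by_cases hxM : x = Mtop
    · exact hxM ▸ conn_refl t Copy Mtop
    set L : Finset (Fin (2 * n)) :=
      Finset.univ.filter (fun i => ((x i : Fin (2 * n)) : ℕ) < 2 * n - 1) with hL
    by_cases hLc : n ≤ L.card
    · -- x is connected to zerov via a bottom family on low coordinates
      obtain ⟨e, he, heL⟩ := hostlemma L hLc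
      have step1 : Conn t Copy x zerov := by
        apply conn_bottom t p₀ hp₀ e he
          (fun i => if i ∈ L then ((x i : Fin (2 * n)) : ℕ) else 2 * n - 1)
        · intro i
          have := (x i).isLt
          show (if i ∈ L then ((x i : Fin (2 * n)) : ℕ) else 2 * n - 1) < 2 * n
          split_ifs <;> omega
        · intro q hq
          have hmem := heL q
          have hlow : ((x (e q) : Fin (2 * n)) : ℕ) < 2 * n - 1 :=
            (Finset.mem_filter.mp hmem).2
          show (if e q ∈ L then ((x (e q) : Fin (2 * n)) : ℕ) else 2 * n - 1) + 1 < 2 * n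
          rw [if_pos hmem]
          omega
        · intro i
          show ((x i : Fin (2 * n)) : ℕ) ≤ (if i ∈ L then ((x i : Fin (2 * n)) : ℕ) else 2 * n - 1)
          split_ifs with h
          · exact le_refl _
          · have := (x i).isLt
            omega
        · intro i
          show (0 : ℕ) ≤ _
          omega
      exact conn_trans t Copy (conn_trans t Copy step1 step2) step3
    · -- x has many maximal coordinates : top family
      set M' : Finset (Fin (2 * n)) :=
        Finset.univ.filter (fun i => ((x i : Fin (2 * n)) : ℕ) = 2 * n - 1) with hM'
      have hMcard : n + 1 ≤ M'.card := by
        have h1 := Finset.card_filter_add_card_filter_not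
          (s := (Finset.univ : Finset (Fin (2 * n))))
          (p := fun i => ((x i : Fin (2 * n)) : ℕ) < 2 * n - 1)
        have h2 : Finset.univ.filter (fun i => ¬ ((x i : Fin (2 * n)) : ℕ) < 2 * n - 1) = M' := by
          apply Finset.filter_congr
          intro i _
          have := (x i).isLt
          constructor
          · intro hh
            omega
          · intro hh
            omega
        rw [h2] at h1
        rw [← hL] at h1
        have h3 : (Finset.univ : Finset (Fin (2 * n))).card = 2 * n := by
          simp [Fintype.card_fin]
        omega
      obtain ⟨e, he, heM⟩ := hostlemma M' (by omega)
      have hae' : ∀ q : P, q ≠ p₁ → (fun _ : Fin (2 * n) => 0) (e q) + 1 < 2 * n := by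
        intro q hq
        have h2n : 2 ≤ n := by
          by_contra hcon
          have hle : Fintype.card P ≤ 1 := by omega
          haveI := Fintype.card_le_one_iff_subsingleton.mp hle
          exact hq (Subsingleton.elim q p₁)
        show 0 + 1 < 2 * n
        omega
      set B' : Fin (2 * n) → Fin (2 * n) := bpt p₁ e (fun _ => 0) ha0 hae' p₁ with hB'
      have hB'_le : ∀ i, ((B' i : Fin (2 * n)) : ℕ) ≤ 1 :=
        fun i => (bpt_val_le p₁ e (fun _ => 0) ha0 hae' p₁ i).2
      have hB'_e₁ : ((B' (e p₁) : Fin (2 * n)) : ℕ) = 0 := by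
        apply bpt_val_neg
        rintro ⟨q', -, hne, heq⟩
        exact hne (he heq)
      have hxge : B' ≤ x := by
        intro i
        rw [Fin.le_def]
        by_cases hind : ∃ q', q' ≤ p₁ ∧ q' ≠ p₁ ∧ e q' = i
        · obtain ⟨q', hq1, hq2, hq3⟩ := hind
          have hiM : i ∈ M' := hq3 ▸ heM q'
          have hxi : ((x i : Fin (2 * n)) : ℕ) = 2 * n - 1 := (Finset.mem_filter.mp hiM).2
          have := hB'_le i
          omega
        · rw [bpt_val_neg p₁ e (fun _ => 0) ha0 hae' p₁ i hind]
          omega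
      have hxne : x ≠ B' := by
        intro h
        obtain ⟨i₀, hi₀⟩ := Finset.card_pos.mp (show 0 < M'.card by omega)
        have hxi : ((x i₀ : Fin (2 * n)) : ℕ) = 2 * n - 1 := (Finset.mem_filter.mp hi₀).2
        have hvals : ((x i₀ : Fin (2 * n)) : ℕ) = ((B' i₀ : Fin (2 * n)) : ℕ) :=
          congrArg Fin.val (congrFun h i₀)
        by_cases hind : ∃ q', q' ≤ p₁ ∧ q' ≠ p₁ ∧ e q' = i₀
        · obtain ⟨q', hq1, hq2, hq3⟩ := hind
          have h2n : 2 ≤ n := by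
            rw [hn]
            exact Fintype.one_lt_card_iff_nontrivial.mpr ⟨⟨q', p₁, hq2⟩⟩
          have := hB'_le i₀
          omega
        · have hB0 : ((B' i₀ : Fin (2 * n)) : ℕ) = 0 :=
            bpt_val_neg p₁ e (fun _ => 0) ha0 hae' p₁ i₀ hind
          omega
      have hMge : B' ≤ Mtop := by
        intro i
        rw [Fin.le_def]
        have := hB'_le i
        show _ ≤ 2 * n - 1
        omega
      have hMne : Mtop ≠ B' := by
        intro h
        have hvals : (2 * n - 1 : ℕ) = ((B' (e p₁) : Fin (2 * n)) : ℕ) :=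
          congrArg Fin.val (congrFun h (e p₁))
        omega
      exact conn_top t p₁ hp₁ e he (fun _ => 0) ha0 hae' x Mtop hxge hxne hMge hMne
  -- base copy C₀
  set f₀ : P → (Fin (2 * n) → Fin (2 * n)) :=
    (fun q => if q = p₁ then Mtop else bpt p₁ e₀ (fun _ => 0) ha0 hae0 q) with hf₀
  have hf₀iff : ∀ a b, f₀ a ≤ f₀ b ↔ a ≤ b :=
    topfam_le_iff p₁ hp₁ e₀ he₀ (fun _ => 0) ha0 hae0 Mtop hMtop_ge hMtop_ne
  set C₀ : Finset (Fin (2 * n) → Fin (2 * n)) := Finset.univ.image f₀ with hC₀def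
  have hC₀copy : Copy C₀ := isCopy_image f₀ hf₀iff
  have hC₀card : C₀.card = n := by
    rw [hC₀def, Finset.card_image_of_injective _ (inj_of_le_iff f₀ hf₀iff), Finset.card_univ, hn]
  have hcardX : Fintype.card (Fin (2 * n) → Fin (2 * n)) = (2 * n) ^ (2 * n) := by
    simp [Fintype.card_fun]
  have hkey : (2 * n) ^ (2 * n) = (2 ^ (2 * n) * n ^ (2 * n - 1)) * n := by
    have h1 : n ^ (2 * n) = n ^ (2 * n - 1) * n := by
      rw [← pow_succ]
      congr 1
      omega
    rw [mul_pow, h1]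
    ring
  have hk : ((Fintype.card (Fin (2 * n) → Fin (2 * n)) : ℕ) : ZMod t)
      = ((2 ^ (2 * n) * n ^ (2 * n - 1) : ℕ) : ZMod t) * ((C₀.card : ℕ) : ZMod t) := by
    rw [hcardX, hC₀card, ← Nat.cast_mul, ← hkey]
  obtain ⟨w, hw1, hw2⟩ := exists_good_weight t Copy Mtop C₀ hC₀copy
    (2 ^ (2 * n) * n ^ (2 * n - 1)) hk hconn
  refine ⟨w, hw1, fun x => ?_⟩
  rw [← ZMod.natCast_eq_natCast_iff]
  show ((cov w x : ℕ) : ZMod t) = ((1 : ℕ) : ZMod t)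
  rw [hw2 x, Nat.cast_one]
end

section
/- Let P be a finite poset with a unique maximal element and a unique minimal element and with |P| ≥ 2. Let t be a positive integer, let d be a positive integer such that the Boolean lattice 2^[d] contains a copy of P, let m = 2d − 1, and let Q = [2|P|]^m. Let a be the element of Q all of whose coordinates equal 2. Then for every x ∈ Q, the function I_{x} − I_{a} : Q → ℤ (the indicator function of {x} minus the indicator function of {a}) is realizable: there exists a weight function w assigning a natural number to each copy of P in Q such that for every y ∈ Q, the sum of w(F) over all copies F of P in Q containing y is congruent modulo t to I_{x}(y) − I_{a}(y). -/
open Finset in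
lemma swap_realizable {P Q : Type*} [PartialOrder P] [Fintype P]
    [PartialOrder Q] [Fintype Q] [DecidableEq Q]
    (t : ℕ) (ht : 0 < t) (f g : P → Q)
    (hf : ∀ p q : P, p ≤ q ↔ f p ≤ f q) (hg : ∀ p q : P, p ≤ q ↔ g p ≤ g q)
    (p₀ : P) (hagree : ∀ p, p ≠ p₀ → f p = g p) (hne : f p₀ ≠ g p₀) :
    ∃ w : Finset Q → ℕ,
      (∀ F, w F ≠ 0 → IsCopy P (↑F : Set Q)) ∧
      ∀ y : Q, ((if y = f p₀ then (1 : ℤ) else 0) - (if y = g p₀ then (1 : ℤ) else 0)) ≡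
        (∑ F ∈ Finset.univ.filter (fun F => y ∈ F), (w F : ℤ)) [ZMOD (t : ℤ)] := by
  classical
  have hfinj : Function.Injective f := fun p q h =>
    le_antisymm ((hf p q).2 h.le) ((hf q p).2 h.ge)
  have hginj : Function.Injective g := fun p q h =>
    le_antisymm ((hg p q).2 h.le) ((hg q p).2 h.ge)
  set F₁ : Finset Q := Finset.univ.image f with hF₁
  set F₂ : Finset Q := Finset.univ.image g with hF₂
  have hcopy : ∀ (h : P → Q), Function.Injective h → (∀ p q : P, p ≤ q ↔ h p ≤ h q) →
      IsCopy P ((Finset.univ.image h : Finset Q) : Set Q) := by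
    intro h hinj hiff
    have hset : ((Finset.univ.image h : Finset Q) : Set Q) = Set.range h := by
      simp
    rw [IsCopy, hset]
    exact ⟨{ toEquiv := Equiv.ofInjective h hinj,
             map_rel_iff' := by
               intro p q
               simp only [Equiv.ofInjective_apply, Subtype.mk_le_mk]
               exact (hiff p q).symm }⟩
  have hxF₁ : f p₀ ∈ F₁ := mem_image_of_mem f (mem_univ p₀)
  have hxF₂ : f p₀ ∉ F₂ := by
    simp only [hF₂, mem_image, mem_univ, true_and, not_exists]
    intro p hp
    by_cases h : p = p₀
    · exact hne (h ▸ hp).symm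
    · exact h (hfinj ((hagree p h).trans hp))
  have hne12 : F₁ ≠ F₂ := fun h => hxF₂ (h ▸ hxF₁)
  refine ⟨fun F => if F = F₁ then 1 else if F = F₂ then t - 1 else 0, ?_, ?_⟩
  · intro F hF
    by_cases h1 : F = F₁
    · exact h1 ▸ hcopy f hfinj hf
    by_cases h2 : F = F₂
    · exact h2 ▸ hcopy g hginj hg
    simp [h1, h2] at hF
  · intro y
    have hsum : (∑ F ∈ Finset.univ.filter (fun F => y ∈ F),
          ((if F = F₁ then 1 else if F = F₂ then t - 1 else 0 : ℕ) : ℤ))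
        = (if y ∈ F₁ then 1 else 0) + (if y ∈ F₂ then ((t : ℤ) - 1) else 0) := by
      rw [Finset.sum_filter]
      rw [← Finset.sum_subset (Finset.subset_univ ({F₁, F₂} : Finset (Finset Q)))
        (by intro F _ hF
            simp only [mem_insert, mem_singleton, not_or] at hF
            simp [hF.1, hF.2])]
      rw [Finset.sum_pair hne12]
      have h1 : ((t : ℤ) - 1) = ((t - 1 : ℕ) : ℤ) := by
        have := ht; push_cast [Nat.cast_sub ht]; ring
      simp only [if_pos rfl, if_neg hne12, if_neg (Ne.symm hne12)]
      split_ifs <;> simp [h1]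
    rw [hsum]
    have hmemF₁ : y ∈ F₁ ↔ (y = f p₀ ∨ ∃ p, p ≠ p₀ ∧ f p = y) := by
      simp only [hF₁, mem_image, mem_univ, true_and]
      constructor
      · rintro ⟨p, rfl⟩
        by_cases h : p = p₀
        · exact Or.inl (by rw [h])
        · exact Or.inr ⟨p, h, rfl⟩
      · rintro (rfl | ⟨p, _, rfl⟩) <;> exact ⟨_, rfl⟩
    have hmemF₂ : y ∈ F₂ ↔ (y = g p₀ ∨ ∃ p, p ≠ p₀ ∧ f p = y) := by
      simp only [hF₂, mem_image, mem_univ, true_and]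
      constructor
      · rintro ⟨p, rfl⟩
        by_cases h : p = p₀
        · exact Or.inl (by rw [h])
        · exact Or.inr ⟨p, h, hagree p h⟩
      · rintro (rfl | ⟨p, hp, rfl⟩)
        · exact ⟨_, rfl⟩
        · exact ⟨p, (hagree p hp).symm⟩
    by_cases hc : ∃ p, p ≠ p₀ ∧ f p = y
    · -- y in common part: y ≠ f p₀, y ≠ g p₀
      obtain ⟨p, hp, rfl⟩ := hc
      have h1 : f p ≠ f p₀ := fun h => hp (hfinj h)
      have h2 : f p ≠ g p₀ := by
        rw [hagree p hp]; exact fun h => hp (hginj h)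
      rw [if_neg h1, if_neg h2, if_pos (hmemF₁.2 (Or.inr ⟨p, hp, rfl⟩)),
        if_pos (hmemF₂.2 (Or.inr ⟨p, hp, rfl⟩))]
      have : (1 : ℤ) + ((t : ℤ) - 1) = t := by ring
      rw [this]
      simpa using (Int.modEq_iff_dvd.2 (by simp) : (0 : ℤ) ≡ (t : ℤ) [ZMOD (t : ℤ)])
    · by_cases h1 : y = f p₀
      · have h2 : y ≠ g p₀ := fun h => hne (h1 ▸ h ▸ rfl)
        rw [if_pos h1, if_neg h2, if_pos (hmemF₁.2 (Or.inl h1)),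
          if_neg (fun h => (hmemF₂.1 h).elim (fun h' => h2 h') (fun h' => hc h'))]
        simp
      · by_cases h2 : y = g p₀
        · rw [if_neg h1, if_pos h2,
            if_neg (fun h => (hmemF₁.1 h).elim (fun h' => h1 h') (fun h' => hc h')),
            if_pos (hmemF₂.2 (Or.inl h2))]
          have : (0 : ℤ) - 1 = -1 := by ring
          rw [this, zero_add]
          exact Int.modEq_iff_dvd.2 (by ring_nf; simp)
        · rw [if_neg h1, if_neg h2,
            if_neg (fun h => (hmemF₁.1 h).elim (fun h' => h1 h') (fun h' => hc h')),
            if_neg (fun h => (hmemF₂.1 h).elim (fun h' => h2 h') (fun h' => hc h'))]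
          simp

/-- Let `P` be a finite poset with a unique maximal and a unique minimal element and with
`|P| ≥ 2`, let `t ≥ 1`, let `d ≥ 1` be such that the Boolean lattice `2^[d]` contains a
copy of `P`, let `m = 2d - 1` and `Q = [2|P|]^m` (modelled as `Fin m → Fin (2|P|)`, where
`Fin (2|P|) = {0, 1, ..., 2|P|-1}` represents `[2|P|] = {1, 2, ..., 2|P|}` via `i ↦ i + 1`).
Let `a ∈ Q` be the element all of whose coordinates equal `2` (i.e. all of whose `Fin`
coordinates equal `1`). Then for every `x ∈ Q` the function `I_{x} - I_{a} : Q → ℤ` is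
realizable: there is a weight function on subsets of `Q`, supported on copies of `P`,
such that the total weight of each `y ∈ Q` is congruent to `I_{x}(y) - I_{a}(y)` mod `t`. -/
theorem indicator_difference_realizable (P : Type*) [PartialOrder P] [Fintype P]
    (hmax : ∃! p : P, IsMax p) (hmin : ∃! p : P, IsMin p)
    (hcard : 2 ≤ Fintype.card P)
    (t : ℕ) (ht : 0 < t) (d : ℕ) (hd : 0 < d)
    (hcopy : ∃ A : Set (Finset (Fin d)), IsCopy P A)
    (a : Fin (2 * d - 1) → Fin (2 * Fintype.card P)) (ha : ∀ i, (a i : ℕ) = 1)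
    (x : Fin (2 * d - 1) → Fin (2 * Fintype.card P)) :
    ∃ w : Finset (Fin (2 * d - 1) → Fin (2 * Fintype.card P)) → ℕ,
      (∀ F, w F ≠ 0 →
        IsCopy P (↑F : Set (Fin (2 * d - 1) → Fin (2 * Fintype.card P)))) ∧
      ∀ y : Fin (2 * d - 1) → Fin (2 * Fintype.card P),
        ((if y = x then (1 : ℤ) else 0) - (if y = a then (1 : ℤ) else 0)) ≡
          (∑ F ∈ Finset.univ.filter (fun F => y ∈ F), (w F : ℤ)) [ZMOD (t : ℤ)] := by
  classical
  by_cases hxa : x = a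
  · refine ⟨fun _ => 0, fun F h => absurd rfl h, fun y => ?_⟩
    subst hxa
    simp [Int.ModEq.refl]
  obtain ⟨M, hMmax, hMuniq⟩ := hmax
  obtain ⟨m₀, hm₀min, hm₀uniq⟩ := hmin
  have hMtop : ∀ p : P, p ≤ M := by
    intro p
    obtain ⟨b, hpb, hb⟩ := Finite.exists_le_maximal (p := fun _ : P => True) (a := p) trivial
    exact hpb.trans (le_of_eq (hMuniq b (fun c hc => hb.2 trivial hc)))
  have hm₀bot : ∀ p : P, m₀ ≤ p := by
    intro p
    obtain ⟨b, hpb, hb⟩ := Finite.exists_le_maximal (α := Pᵒᵈ) (p := fun _ => True)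
      (a := OrderDual.toDual p) trivial
    have hpb' : OrderDual.ofDual b ≤ p := hpb
    have hbmin : IsMin (OrderDual.ofDual b) := fun c hc => hb.2 (y := OrderDual.toDual c) trivial hc
    exact (le_of_eq (hm₀uniq _ hbmin).symm).trans hpb'
  obtain ⟨A, ⟨e⟩⟩ := hcopy
  set φ : P → Finset (Fin d) := fun p => (e p : Finset (Fin d)) with hφ
  have hφiff : ∀ p q : P, p ≤ q ↔ φ p ⊆ φ q := by
    intro p q
    constructor
    · intro h
      exact Finset.le_iff_subset.1 (Subtype.coe_le_coe.2 (e.le_iff_le.2 h))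
    · intro h
      exact e.le_iff_le.1 (Subtype.coe_le_coe.1 (Finset.le_iff_subset.2 h))
  have hφinj : Function.Injective φ := by
    intro p q h
    exact le_antisymm ((hφiff p q).2 (h ▸ Finset.Subset.refl _))
      ((hφiff q p).2 (h ▸ Finset.Subset.refl _))
  set G₁ : Finset (Fin (2 * d - 1)) :=
    Finset.univ.filter (fun i => 2 ≤ ((x i : ℕ))) with hG₁
  set G₂ : Finset (Fin (2 * d - 1)) :=
    Finset.univ.filter (fun i => ((x i : ℕ)) + 3 ≤ 2 * Fintype.card P) with hG₂
  have hcover : (G₁ ∪ G₂) = Finset.univ := by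
    apply Finset.eq_univ_iff_forall.2
    intro i
    have := (x i).isLt
    simp only [hG₁, hG₂, Finset.mem_union, Finset.mem_filter, Finset.mem_univ, true_and]
    omega
  have hG : d ≤ G₁.card ∨ d ≤ G₂.card := by
    by_contra h
    push_neg at h
    have h1 := Finset.card_union_le G₁ G₂
    rw [hcover, Finset.card_univ, Fintype.card_fin] at h1
    omega
  rcases hG with hGc | hGc
  · -- Case 1: many coordinates of x are ≥ 2; swap at the maximum M.
    obtain ⟨T, hTsub, hTcard⟩ := Finset.exists_subset_card_eq hGc
    set gg : Fin d → Fin (2 * d - 1) :=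
      fun j => ((T.orderIsoOfFin hTcard) j : Fin (2 * d - 1)) with hgg
    have hgginj : Function.Injective gg := by
      intro j j' h
      exact (T.orderIsoOfFin hTcard).injective (Subtype.ext h)
    have hx2 : ∀ j, 2 ≤ ((x (gg j) : ℕ)) := by
      intro j
      have hmem : gg j ∈ T := ((T.orderIsoOfFin hTcard) j).2
      have := hTsub hmem
      rw [hG₁, Finset.mem_filter] at this
      exact this.2
    set ψ : P → (Fin (2 * d - 1) → Fin (2 * Fintype.card P)) :=
      fun p i => (⟨if (∃ j, gg j = i ∧ j ∈ φ p) then 1 else 0,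
        by split <;> omega⟩ : Fin (2 * Fintype.card P)) with hψ
    have hψval : ∀ p i, ((ψ p i : ℕ)) = if (∃ j, gg j = i ∧ j ∈ φ p) then 1 else 0 := by
      intro p i; rw [hψ]
    have hψiff : ∀ p q : P, ψ p ≤ ψ q ↔ φ p ⊆ φ q := by
      intro p q
      constructor
      · intro hle j hj
        have h := hle (gg j)
        rw [Fin.le_def, hψval, hψval, if_pos ⟨j, rfl, hj⟩] at h
        by_contra hjq
        rw [if_neg] at h
        · omega
        · rintro ⟨j', hj'e, hj'⟩
          exact hjq (hgginj hj'e ▸ hj')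
      · intro hsub i
        rw [Fin.le_def, hψval, hψval]
        split_ifs with h1 h2
        · omega
        · obtain ⟨j, hji, hj⟩ := h1
          exact absurd ⟨j, hji, hsub hj⟩ h2
        · omega
        · omega
    have hstrictx : ∀ p : P, ψ p < x := by
      intro p
      refine lt_of_le_of_ne (fun i => ?_) (fun heq => ?_)
      · rw [Fin.le_def, hψval]
        split_ifs with h1
        · obtain ⟨j, rfl, _⟩ := h1
          have := hx2 j
          omega
        · omega
      · have h := congrArg Fin.val (congrFun heq (gg ⟨0, hd⟩))
        rw [hψval] at h
        have := hx2 ⟨0, hd⟩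
        split_ifs at h <;> omega
    have hstricta : ∀ p : P, p ≠ M → ψ p < a := by
      intro p hp
      have hnotuniv : ∃ j, j ∉ φ p := by
        by_contra h
        push_neg at h
        have huniv : φ p = Finset.univ := Finset.eq_univ_iff_forall.2 h
        have h1 : φ p ⊆ φ M := (hφiff p M).1 (hMtop p)
        have h2 : φ M = φ p := Finset.Subset.antisymm (huniv ▸ Finset.subset_univ _) h1
        exact hp (hφinj h2.symm)
      obtain ⟨j, hj⟩ := hnotuniv
      refine lt_of_le_of_ne (fun i => ?_) (fun heq => ?_)
      · rw [Fin.le_def, hψval, ha i]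
        split_ifs <;> omega
      · have h := congrArg Fin.val (congrFun heq (gg j))
        rw [hψval, ha] at h
        rw [if_neg] at h
        · omega
        · rintro ⟨j', hj'e, hj'⟩
          exact hj (hgginj hj'e ▸ hj')
    have hemb : ∀ z : (Fin (2 * d - 1) → Fin (2 * Fintype.card P)),
        (∀ p : P, p ≠ M → ψ p < z) →
        ∀ p q : P, p ≤ q ↔ (if p = M then z else ψ p) ≤ (if q = M then z else ψ q) := by
      intro z hz p q
      by_cases hp : p = M <;> by_cases hq : q = M
      · subst hp; subst hq; simp
      · subst hp
        simp only [if_pos rfl, if_neg hq]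
        exact iff_of_false (fun h => hq (le_antisymm (hMtop q) h))
          (fun h => (hz q hq).not_ge h)
      · subst hq
        simp only [if_neg hp, if_pos rfl]
        exact iff_of_true (hMtop p) (hz p hp).le
      · simp only [if_neg hp, if_neg hq]
        exact (hφiff p q).trans (hψiff p q).symm
    obtain ⟨w, hw1, hw2⟩ := swap_realizable t ht
      (fun p => if p = M then x else ψ p) (fun p => if p = M then a else ψ p)
      (hemb x (fun p _ => hstrictx p)) (hemb a hstricta) M
      (fun p hp => by simp [if_neg hp]) (by simpa using hxa)
    refine ⟨w, hw1, fun y => ?_⟩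
    simpa using hw2 y
  · -- Case 2: many coordinates of x are small; swap at the minimum m₀.
    obtain ⟨T, hTsub, hTcard⟩ := Finset.exists_subset_card_eq hGc
    set gg : Fin d → Fin (2 * d - 1) :=
      fun j => ((T.orderIsoOfFin hTcard) j : Fin (2 * d - 1)) with hgg
    have hgginj : Function.Injective gg := by
      intro j j' h
      exact (T.orderIsoOfFin hTcard).injective (Subtype.ext h)
    have hx2 : ∀ j, ((x (gg j) : ℕ)) + 3 ≤ 2 * Fintype.card P := by
      intro j
      have hmem : gg j ∈ T := ((T.orderIsoOfFin hTcard) j).2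
      have := hTsub hmem
      rw [hG₂, Finset.mem_filter] at this
      exact this.2
    set ψ : P → (Fin (2 * d - 1) → Fin (2 * Fintype.card P)) :=
      fun p i => (⟨if (∃ j, gg j = i ∧ j ∉ φ p) then 2 * Fintype.card P - 2
        else 2 * Fintype.card P - 1,
        by split <;> omega⟩ : Fin (2 * Fintype.card P)) with hψ
    have hψval : ∀ p i, ((ψ p i : ℕ)) = if (∃ j, gg j = i ∧ j ∉ φ p)
        then 2 * Fintype.card P - 2 else 2 * Fintype.card P - 1 := by
      intro p i; rw [hψ]
    have hψiff : ∀ p q : P, ψ p ≤ ψ q ↔ φ p ⊆ φ q := by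
      intro p q
      constructor
      · intro hle j hj
        have h := hle (gg j)
        rw [Fin.le_def, hψval, hψval] at h
        rw [if_neg (by rintro ⟨j', hj'e, hj'⟩; exact hj' (hgginj hj'e ▸ hj))] at h
        by_contra hjq
        rw [if_pos ⟨j, rfl, hjq⟩] at h
        omega
      · intro hsub i
        rw [Fin.le_def, hψval, hψval]
        by_cases hq : ∃ j, gg j = i ∧ j ∉ φ q
        · obtain ⟨j, hji, hj⟩ := hq
          rw [if_pos (⟨j, hji, fun hc => hj (hsub hc)⟩ :
            ∃ j, gg j = i ∧ j ∉ φ p), if_pos ⟨j, hji, hj⟩]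
        · rw [if_neg hq]
          split_ifs <;> omega
    have hstrictx : ∀ p : P, x < ψ p := by
      intro p
      refine lt_of_le_of_ne (fun i => ?_) (fun heq => ?_)
      · rw [Fin.le_def, hψval]
        have := (x i).isLt
        split_ifs with h1
        · obtain ⟨j, rfl, _⟩ := h1
          have := hx2 j
          omega
        · omega
      · have h := congrArg Fin.val (congrFun heq (gg ⟨0, hd⟩))
        rw [hψval] at h
        have := hx2 ⟨0, hd⟩
        split_ifs at h <;> omega
    have hstricta : ∀ p : P, a < ψ p := by
      intro p
      refine lt_of_le_of_ne (fun i => ?_) (fun heq => ?_)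
      · rw [Fin.le_def, hψval, ha i]
        split_ifs <;> omega
      · have h := congrArg Fin.val (congrFun heq (gg ⟨0, hd⟩))
        rw [hψval, ha] at h
        split_ifs at h <;> omega
    have hemb : ∀ z : (Fin (2 * d - 1) → Fin (2 * Fintype.card P)),
        (∀ p : P, p ≠ m₀ → z < ψ p) →
        ∀ p q : P, p ≤ q ↔ (if p = m₀ then z else ψ p) ≤ (if q = m₀ then z else ψ q) := by
      intro z hz p q
      by_cases hp : p = m₀ <;> by_cases hq : q = m₀
      · subst hp; subst hq; simp
      · subst hp
        simp only [if_pos rfl, if_neg hq]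
        exact iff_of_true (hm₀bot q) (hz q hq).le
      · subst hq
        simp only [if_neg hp, if_pos rfl]
        exact iff_of_false (fun h => hp (le_antisymm h (hm₀bot p)))
          (fun h => (hz p hp).not_ge h)
      · simp only [if_neg hp, if_neg hq]
        exact (hφiff p q).trans (hψiff p q).symm
    obtain ⟨w, hw1, hw2⟩ := swap_realizable t ht
      (fun p => if p = m₀ then x else ψ p) (fun p => if p = m₀ then a else ψ p)
      (hemb x (fun p _ => hstrictx p)) (hemb a (fun p _ => hstricta p)) m₀
      (fun p hp => by simp [if_neg hp]) (by simpa using hxa)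
    refine ⟨w, hw1, fun y => ?_⟩
    simpa using hw2 y
end

section
/- Let P be a finite poset with a unique maximal element and a unique minimal element and with |P| ≥ 2. Let t be a positive integer, let d be a positive integer such that the Boolean lattice 2^[d] contains a copy of P, let m = 2d − 1, and let Q = [2|P|]^m. Then every function f : Q → ℤ satisfying Σ_{x ∈ Q} f(x) ≡ 0 (mod t) is realizable: there exists a weight function w assigning a natural number to each copy of P in Q such that for every y ∈ Q, the sum of w(F) over all copies F of P in Q containing y is congruent to f(y) modulo t. -/
section RealAlg

variable (P : Type*) [PartialOrder P]
variable {Q : Type*} [PartialOrder Q] [Fintype Q] [DecidableEq Q]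

def Realizable (t : ℕ) (f : Q → ℤ) : Prop :=
  ∃ w : Finset Q → ℕ, (∀ F, w F ≠ 0 → IsCopy P (↑F : Set Q)) ∧
    ∀ y, f y ≡ (∑ F ∈ Finset.univ.filter (fun F => y ∈ F), (w F : ℤ)) [ZMOD (t : ℤ)]

variable {P} {t : ℕ}

theorem real_zero : Realizable P t (fun _ : Q => 0) :=
  ⟨fun _ => 0, fun F h => absurd rfl h, fun y => by simp [Int.ModEq]⟩

theorem real_congr {f g : Q → ℤ} (h : Realizable P t f) (hfg : ∀ y, f y ≡ g y [ZMOD (t : ℤ)]) :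
    Realizable P t g := by
  obtain ⟨w, hw, hs⟩ := h
  exact ⟨w, hw, fun y => (hfg y).symm.trans (hs y)⟩

theorem real_add {f g : Q → ℤ} (hf : Realizable P t f) (hg : Realizable P t g) :
    Realizable P t (fun y => f y + g y) := by
  obtain ⟨w1, hw1, hs1⟩ := hf
  obtain ⟨w2, hw2, hs2⟩ := hg
  refine ⟨fun F => w1 F + w2 F, fun F h => ?_, fun y => ?_⟩
  · by_cases h1 : w1 F = 0
    · exact hw2 F (fun h2 => h (show w1 F + w2 F = 0 by omega))
    · exact hw1 F h1
  · have := (hs1 y).add (hs2 y)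
    calc f y + g y ≡ _ [ZMOD (t:ℤ)] := this
    _ = _ := by rw [← Finset.sum_add_distrib]; push_cast; rfl

theorem real_natmul (k : ℕ) {f : Q → ℤ} (hf : Realizable P t f) :
    Realizable P t (fun y => (k : ℤ) * f y) := by
  obtain ⟨w, hw, hs⟩ := hf
  refine ⟨fun F => k * w F, fun F h => hw F (by intro h0; simp [h0] at h), fun y => ?_⟩
  have := (hs y).mul_left (k : ℤ)
  calc (k:ℤ) * f y ≡ _ [ZMOD (t:ℤ)] := this
  _ = _ := by rw [Finset.mul_sum]; push_cast; rfl

theorem real_intmul (c : ℤ) (ht : 0 < t) {f : Q → ℤ} (hf : Realizable P t f) :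
    Realizable P t (fun y => c * f y) := by
  have ht' : (t : ℤ) ≠ 0 := by exact_mod_cast ht.ne'
  set k : ℕ := (c % t).toNat with hk
  have hknn : (0:ℤ) ≤ c % t := Int.emod_nonneg c ht'
  have hkc : (k : ℤ) ≡ c [ZMOD (t:ℤ)] := by
    rw [hk, Int.toNat_of_nonneg hknn]
    exact (Int.emod_emod_of_dvd c dvd_rfl)
  exact real_congr (real_natmul k hf) (fun y => (hkc.mul_right (f y)))

theorem real_neg (ht : 0 < t) {f : Q → ℤ} (hf : Realizable P t f) :
    Realizable P t (fun y => - f y) :=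
  real_congr (real_intmul (-1) ht hf) (fun y => by rw [neg_one_mul])

theorem real_sum {ι : Type*} (s : Finset ι) (g : ι → Q → ℤ)
    (h : ∀ i ∈ s, Realizable P t (g i)) :
    Realizable P t (fun y => ∑ i ∈ s, g i y) := by
  induction s using Finset.cons_induction with
  | empty => simpa using (real_zero (P := P) (t := t) (Q := Q))
  | cons a s ha ih =>
    have := real_add (h a (Finset.mem_cons_self a s))
      (ih (fun i hi => h i (Finset.mem_cons_of_mem hi)))
    exact real_congr this (fun y => by rw [Finset.sum_cons])

theorem real_copy (F : Finset Q) (h : IsCopy P (↑F : Set Q)) :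
    Realizable P t (fun y => if y ∈ F then (1:ℤ) else 0) := by
  classical
  refine ⟨fun G => if G = F then 1 else 0, fun G hG => ?_, fun y => ?_⟩
  · by_cases hGF : G = F
    · subst hGF; exact h
    · simp [hGF] at hG
  · show (if y ∈ F then (1:ℤ) else 0) ≡ _ [ZMOD (t:ℤ)]
    have : (∑ G ∈ Finset.univ.filter (fun G => y ∈ G),
        (((if G = F then 1 else 0) : ℕ) : ℤ)) = if y ∈ F then 1 else 0 := by
      simp only [apply_ite (Nat.cast : ℕ → ℤ), Nat.cast_one, Nat.cast_zero]
      rw [Finset.sum_ite_eq' (Finset.univ.filter (fun G => y ∈ G)) F (fun _ => (1:ℤ))]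
      simp
    rw [this]

end RealAlg

section Geom

variable {P : Type*} [PartialOrder P] [Fintype P]
variable {Q : Type*} [PartialOrder Q] [Fintype Q] [DecidableEq Q]

theorem isCopy_image_s6 (ψ : P → Q) (hψ : ∀ p q, ψ p ≤ ψ q ↔ p ≤ q) :
    IsCopy P (↑(Finset.image ψ Finset.univ) : Set Q) := by
  have hinj : Function.Injective ψ := fun p q h =>
    le_antisymm ((hψ p q).1 h.le) ((hψ q p).1 h.ge)
  set F := Finset.image ψ Finset.univ with hF
  have hmem : ∀ p, ψ p ∈ F := fun p => Finset.mem_image_of_mem ψ (Finset.mem_univ p)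
  let g : P → (↑F : Set Q) := fun p => ⟨ψ p, hmem p⟩
  have hbij : Function.Bijective g := by
    constructor
    · intro p q h
      exact hinj (Subtype.ext_iff.1 h)
    · rintro ⟨y, hy⟩
      rw [Finset.mem_coe, hF, Finset.mem_image] at hy
      obtain ⟨p, _, hp⟩ := hy
      exact ⟨p, Subtype.ext hp⟩
  exact ⟨{ toEquiv := Equiv.ofBijective g hbij,
           map_rel_iff' := fun {p q} => by
             show (ψ p : Q) ≤ ψ q ↔ p ≤ q
             exact hψ p q }⟩

theorem real_swap {t : ℕ} (ht : 0 < t) (ψ ψ' : P → Q)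
    (hψ : ∀ p q, ψ p ≤ ψ q ↔ p ≤ q) (hψ' : ∀ p q, ψ' p ≤ ψ' q ↔ p ≤ q)
    (p₀ : P) (hagree : ∀ p, p ≠ p₀ → ψ' p = ψ p)
    (h1 : ∀ p, ψ p ≠ ψ' p₀) (h2 : ∀ p, ψ' p ≠ ψ p₀) :
    Realizable P t (fun y => (if y = ψ p₀ then (1:ℤ) else 0) - (if y = ψ' p₀ then 1 else 0)) := by
  classical
  set F := Finset.image ψ Finset.univ with hF
  set F' := Finset.image ψ' Finset.univ with hF'
  have hcF := real_copy (P := P) (t := t) F (isCopy_image_s6 ψ hψ)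
  have hcF' := real_copy (P := P) (t := t) F' (isCopy_image_s6 ψ' hψ')
  have hsum := real_add hcF (real_natmul (t - 1) hcF')
  refine real_congr hsum (fun y => ?_)
  have hyF : y ∈ F ↔ ∃ p, ψ p = y := by simp [hF, Finset.mem_image]
  have hyF' : y ∈ F' ↔ ∃ p, ψ' p = y := by simp [hF', Finset.mem_image]
  have htc : ((t - 1 : ℕ) : ℤ) = (t : ℤ) - 1 := by
    have := ht; push_cast [Nat.cast_sub (Nat.one_le_iff_ne_zero.2 ht.ne')]; ring
  by_cases hy1 : y = ψ p₀
  · have hyF0 : y ∈ F := hyF.2 ⟨p₀, hy1.symm⟩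
    have hyF'0 : y ∉ F' := fun h => by
      obtain ⟨p, hp⟩ := hyF'.1 h
      exact h2 p (hp.trans hy1)
    have hy2 : y ≠ ψ' p₀ := fun h => h2 p₀ (h ▸ hy1.symm).symm
    simp only [if_pos hyF0, if_neg hyF'0, if_pos hy1, if_neg hy2, mul_zero, add_zero]
    norm_num
  · by_cases hy2 : y = ψ' p₀
    · have hyF0 : y ∉ F := fun h => by
        obtain ⟨p, hp⟩ := hyF.1 h
        exact h1 p (hp.trans hy2)
      have hyF'0 : y ∈ F' := hyF'.2 ⟨p₀, hy2.symm⟩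
      simp only [if_neg hyF0, if_pos hyF'0, if_neg hy1, if_pos hy2, htc]
      calc (0 : ℤ) + ((t:ℤ) - 1) * 1 = (0 - 1) + t := by ring
      _ ≡ (0 - 1) + 0 [ZMOD (t:ℤ)] := Int.ModEq.add_left _ (Int.modEq_zero_iff_dvd.2 dvd_rfl)
      _ = 0 - 1 := by ring
    · have hmm : y ∈ F ↔ y ∈ F' := by
        rw [hyF, hyF']
        constructor
        · rintro ⟨p, hp⟩
          have hpp : p ≠ p₀ := fun h => hy1 (h ▸ hp).symm
          exact ⟨p, (hagree p hpp).trans hp⟩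
        · rintro ⟨p, hp⟩
          have hpp : p ≠ p₀ := fun h => hy2 (h ▸ hp).symm
          exact ⟨p, (hagree p hpp).symm.trans hp⟩
      by_cases hyF0 : y ∈ F
      · have hyF'0 : y ∈ F' := hmm.1 hyF0
        simp only [if_pos hyF0, if_pos hyF'0, if_neg hy1, if_neg hy2, htc]
        calc (1:ℤ) + ((t:ℤ)-1) * 1 = (0 - 0) + t := by ring
        _ ≡ (0 - 0) + 0 [ZMOD (t:ℤ)] := Int.ModEq.add_left _ (Int.modEq_zero_iff_dvd.2 dvd_rfl)
        _ = 0 - 0 := by ring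
      · have hyF'0 : y ∉ F' := fun h => hyF0 (hmm.2 h)
        simp only [if_neg hyF0, if_neg hyF'0, if_neg hy1, if_neg hy2, mul_zero, add_zero]
        norm_num

end Geom

section Psi

variable {P : Type*} [PartialOrder P] [Fintype P] {d m N : ℕ}

def psiFun (ρ : P → Finset (Fin d)) (ι : Fin d ↪ Fin m) (a : Fin m → Fin N)
    (ha : ∀ (p : P) (j : Fin m), (∃ i ∈ ρ p, ι i = j) → (a j : ℕ) + 1 < N)
    (p : P) (j : Fin m) : Fin N :=
  if h : ∃ i ∈ ρ p, ι i = j then ⟨(a j : ℕ) + 1, ha p j h⟩ else a j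

theorem psiFun_le_iff (ρ : P → Finset (Fin d)) (hρ : ∀ p q, ρ p ⊆ ρ q ↔ p ≤ q)
    (ι : Fin d ↪ Fin m) (a : Fin m → Fin N)
    (ha : ∀ (p : P) (j : Fin m), (∃ i ∈ ρ p, ι i = j) → (a j : ℕ) + 1 < N)
    (p q : P) : psiFun ρ ι a ha p ≤ psiFun ρ ι a ha q ↔ p ≤ q := by
  constructor
  · intro h
    rw [← hρ]
    intro i hi
    have hj := h (ι i)
    by_contra hiq
    have hcp : ∃ i' ∈ ρ p, ι i' = ι i := ⟨i, hi, rfl⟩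
    have hcq : ¬ ∃ i' ∈ ρ q, ι i' = ι i := by
      rintro ⟨i', hi', he⟩
      exact hiq (ι.injective he ▸ hi')
    rw [psiFun, psiFun, dif_pos hcp, dif_neg hcq] at hj
    rw [Fin.le_def] at hj
    simp at hj
  · intro hpq j
    have hsub := (hρ p q).2 hpq
    by_cases hp : ∃ i ∈ ρ p, ι i = j
    · obtain ⟨i, hi, rfl⟩ := hp
      have hq : ∃ i' ∈ ρ q, ι i' = ι i := ⟨i, hsub hi, rfl⟩
      rw [psiFun, psiFun, dif_pos ⟨i, hi, rfl⟩, dif_pos hq]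
    · rw [psiFun, psiFun, dif_neg hp]
      by_cases hq : ∃ i ∈ ρ q, ι i = j
      · rw [dif_pos hq, Fin.le_def]
        exact Nat.le_succ _
      · rw [dif_neg hq]

variable {Q : Type*}

theorem real_edge_min {t : ℕ} (ht : 0 < t)
    (ρ : P → Finset (Fin d)) (hρ : ∀ p q, ρ p ⊆ ρ q ↔ p ≤ q)
    (p₀ : P) (hp₀ : ∀ p, p₀ ≤ p) (hρ₀ : ρ p₀ = ∅)
    (ι : Fin d ↪ Fin m) (a : Fin m → Fin N)
    (ha : ∀ (p : P) (j : Fin m), (∃ i ∈ ρ p, ι i = j) → (a j : ℕ) + 1 < N)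
    (a' : Fin m → Fin N) (ha' : a' < a) :
    Realizable P t (fun y : Fin m → Fin N =>
      (if y = a then (1:ℤ) else 0) - if y = a' then 1 else 0) := by
  classical
  set ψ := psiFun ρ ι a ha with hψdef
  have hψ := psiFun_le_iff ρ hρ ι a ha
  have hψ0 : ψ p₀ = a := by
    funext j
    rw [hψdef, psiFun, dif_neg (by simp [hρ₀])]
  have hmin : ∀ p, a ≤ ψ p := fun p => hψ0 ▸ (hψ p₀ p).2 (hp₀ p)
  set ψ' : P → (Fin m → Fin N) := fun p => if p = p₀ then a' else ψ p with hψ'def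
  have hψ'0 : ψ' p₀ = a' := by rw [hψ'def]; simp
  have hψ' : ∀ p q, ψ' p ≤ ψ' q ↔ p ≤ q := by
    intro p q
    by_cases hp : p = p₀ <;> by_cases hq : q = p₀
    · subst hp; subst hq; simp
    · subst hp
      simp only [hψ'def, if_pos rfl, if_neg hq]
      constructor
      · intro _; exact hp₀ q
      · intro _; exact le_of_lt (lt_of_lt_of_le ha' (hmin q))
    · subst hq
      simp only [hψ'def, if_pos rfl, if_neg hp]
      constructor
      · intro h
        exact absurd (lt_of_le_of_lt (le_trans (hmin p) h) ha') (lt_irrefl _)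
      · intro h
        exact absurd (le_antisymm h (hp₀ p)) hp
    · simp only [hψ'def, if_neg hp, if_neg hq]
      exact hψ p q
  have hinj : Function.Injective ψ := fun p q h =>
    le_antisymm ((hψ p q).1 h.le) ((hψ q p).1 h.ge)
  have h1 : ∀ p, ψ p ≠ ψ' p₀ := by
    intro p
    rw [hψ'0]
    exact (ne_of_gt (lt_of_lt_of_le ha' (hmin p)))
  have h2 : ∀ p, ψ' p ≠ ψ p₀ := by
    intro p
    rw [hψ0]
    by_cases hp : p = p₀
    · subst hp; rw [hψ'0]; exact ne_of_lt ha'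
    · rw [hψ'def]; simp only [if_neg hp]
      intro h
      exact hp (hinj (h.trans hψ0.symm))
  have hagree : ∀ p, p ≠ p₀ → ψ' p = ψ p := fun p hp => by
    rw [hψ'def]; simp [hp]
  have := real_swap ht ψ ψ' hψ hψ' p₀ hagree h1 h2
  rw [hψ0, hψ'0] at this
  exact this

theorem real_edge_max {t : ℕ} (ht : 0 < t)
    (ρ : P → Finset (Fin d)) (hρ : ∀ p q, ρ p ⊆ ρ q ↔ p ≤ q)
    (p₁ : P) (hp₁ : ∀ p, p ≤ p₁)
    (ι : Fin d ↪ Fin m) (a : Fin m → Fin N)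
    (ha : ∀ (p : P) (j : Fin m), (∃ i ∈ ρ p, ι i = j) → (a j : ℕ) + 1 < N)
    (b : Fin m → Fin N) (hb : psiFun ρ ι a ha p₁ < b) :
    Realizable P t (fun y : Fin m → Fin N =>
      (if y = psiFun ρ ι a ha p₁ then (1:ℤ) else 0) - if y = b then 1 else 0) := by
  classical
  set ψ := psiFun ρ ι a ha with hψdef
  have hψ := psiFun_le_iff ρ hρ ι a ha
  have hmax : ∀ p, ψ p ≤ ψ p₁ := fun p => (hψ p p₁).2 (hp₁ p)
  set ψ' : P → (Fin m → Fin N) := fun p => if p = p₁ then b else ψ p with hψ'def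
  have hψ'0 : ψ' p₁ = b := by rw [hψ'def]; simp
  have hψ' : ∀ p q, ψ' p ≤ ψ' q ↔ p ≤ q := by
    intro p q
    by_cases hp : p = p₁ <;> by_cases hq : q = p₁
    · subst hp; subst hq; simp
    · subst hp
      simp only [hψ'def, if_pos rfl, if_neg hq]
      constructor
      · intro h
        exact absurd (lt_of_lt_of_le (lt_of_le_of_lt (hmax q) hb) h) (lt_irrefl _)
      · intro h
        exact absurd (le_antisymm (hp₁ q) h) hq
    · subst hq
      simp only [hψ'def, if_pos rfl, if_neg hp]
      constructor
      · intro _; exact hp₁ p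
      · intro _; exact le_of_lt (lt_of_le_of_lt (hmax p) hb)
    · simp only [hψ'def, if_neg hp, if_neg hq]
      exact hψ p q
  have hinj : Function.Injective ψ := fun p q h =>
    le_antisymm ((hψ p q).1 h.le) ((hψ q p).1 h.ge)
  have h1 : ∀ p, ψ p ≠ ψ' p₁ := by
    intro p
    rw [hψ'0]
    exact ne_of_lt (lt_of_le_of_lt (hmax p) hb)
  have h2 : ∀ p, ψ' p ≠ ψ p₁ := by
    intro p
    by_cases hp : p = p₁
    · subst hp; rw [hψ'0]; exact ne_of_gt hb
    · rw [hψ'def]; simp only [if_neg hp]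
      intro h
      exact hp (hinj h)
  have hagree : ∀ p, p ≠ p₁ → ψ' p = ψ p := fun p hp => by
    rw [hψ'def]; simp [hp]
  have := real_swap ht ψ ψ' hψ hψ' p₁ hagree h1 h2
  rw [hψ'0] at this
  exact this

end Psi


/-- Let `P` be a finite poset with a unique maximal and a unique minimal element and with
`|P| ≥ 2`, let `t ≥ 1`, let `d ≥ 1` be such that the Boolean lattice `2^[d]` contains a
copy of `P`, let `m = 2d - 1` and `Q = [2|P|]^m` (modelled as `Fin m → Fin (2|P|)` with
the componentwise order). Then every function `f : Q → ℤ` with `∑_{x ∈ Q} f(x) ≡ 0 (mod t)`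
is realizable: there is a weight function on subsets of `Q`, supported on copies of `P`,
such that the total weight of each `y ∈ Q` is congruent to `f(y)` mod `t`. -/
theorem zero_sum_realizable (P : Type*) [PartialOrder P] [Fintype P]
    (hmax : ∃! p : P, IsMax p) (hmin : ∃! p : P, IsMin p)
    (hcard : 2 ≤ Fintype.card P)
    (t : ℕ) (ht : 0 < t) (d : ℕ) (hd : 0 < d)
    (hcopy : ∃ A : Set (Finset (Fin d)), IsCopy P A)
    (f : (Fin (2 * d - 1) → Fin (2 * Fintype.card P)) → ℤ)
    (hf : (∑ x : Fin (2 * d - 1) → Fin (2 * Fintype.card P), f x) ≡ 0 [ZMOD (t : ℤ)]) :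
    ∃ w : Finset (Fin (2 * d - 1) → Fin (2 * Fintype.card P)) → ℕ,
      (∀ F, w F ≠ 0 →
        IsCopy P (↑F : Set (Fin (2 * d - 1) → Fin (2 * Fintype.card P)))) ∧
      ∀ y : Fin (2 * d - 1) → Fin (2 * Fintype.card P),
        f y ≡ (∑ F ∈ Finset.univ.filter (fun F => y ∈ F), (w F : ℤ)) [ZMOD (t : ℤ)] := by
  classical
  have hN : 4 ≤ 2 * Fintype.card P := by omega
  -- extract global max and min of P
  obtain ⟨pM, hpM, hpMu⟩ := hmax
  obtain ⟨pm, hpm, hpmu⟩ := hmin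
  have hpMall : ∀ p : P, p ≤ pM := by
    intro p
    obtain ⟨b, hb, hbmax⟩ := Finite.exists_le_maximal (p := fun _ : P => True) trivial (a := p)
    have hbm : IsMax b := fun y hy => hbmax.2 trivial hy
    exact (hpMu b hbm) ▸ hb
  have hpmall : ∀ p : P, pm ≤ p := by
    intro p
    obtain ⟨b, hb, hbmin⟩ := Finite.exists_le_minimal (p := fun _ : P => True) trivial (a := p)
    have hbm : IsMin b := fun y hy => hbmin.2 trivial hy
    exact (hpmu b hbm) ▸ hb
  -- the normalized embedding ρ of P into finsets of Fin d
  obtain ⟨A, ⟨e⟩⟩ := hcopy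
  set φ : P → Finset (Fin d) := fun p => (e p : Finset (Fin d)) with hφdef
  have hφ : ∀ p q, φ p ⊆ φ q ↔ p ≤ q := by
    intro p q
    rw [hφdef]
    calc (e p : Finset (Fin d)) ⊆ (e q : Finset (Fin d))
        ↔ (e p : Finset (Fin d)) ≤ e q := Finset.le_iff_subset.symm
      _ ↔ e p ≤ e q := Subtype.coe_le_coe
      _ ↔ p ≤ q := e.le_iff_le
  have hsubm : ∀ p, φ pm ⊆ φ p := fun p => (hφ pm p).2 (hpmall p)
  set ρ : P → Finset (Fin d) := fun p => φ p \ φ pm with hρdef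
  have hρ : ∀ p q, ρ p ⊆ ρ q ↔ p ≤ q := by
    intro p q
    rw [← hφ]
    constructor
    · intro h x hx
      by_cases hxm : x ∈ φ pm
      · exact hsubm q hxm
      · have : x ∈ ρ q := h (by rw [hρdef]; exact Finset.mem_sdiff.2 ⟨hx, hxm⟩)
        rw [hρdef] at this
        exact (Finset.mem_sdiff.1 this).1
    · intro h
      rw [hρdef]
      exact Finset.sdiff_subset_sdiff h (Finset.Subset.refl _)
  have hρ₀ : ρ pm = ∅ := by rw [hρdef]; simp
  -- an embedding into any large enough coordinate set
  have embed_into : ∀ (U : Finset (Fin (2 * d - 1))), d ≤ U.card →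
      ∃ ι : Fin d ↪ Fin (2 * d - 1), ∀ i, ι i ∈ U := by
    intro U hU
    have hcle : Fintype.card (Fin d) ≤ Fintype.card {j // j ∈ U} := by
      rw [Fintype.card_fin, Fintype.card_coe]; exact hU
    obtain ⟨g⟩ := Function.Embedding.nonempty_of_card_le hcle
    exact ⟨g.trans (Function.Embedding.subtype _), fun i => (g i).2⟩
  -- dichotomy
  have dich : ∀ x : Fin (2 * d - 1) → Fin (2 * Fintype.card P),
      (∃ ι : Fin d ↪ Fin (2 * d - 1), ∀ i, ((x (ι i) : ℕ) + 1 < 2 * Fintype.card P)) ∨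
      (∃ ι : Fin d ↪ Fin (2 * d - 1), ∀ i, 1 ≤ (x (ι i) : ℕ)) := by
    intro x
    set U := Finset.univ.filter (fun j => (x j : ℕ) + 1 < 2 * Fintype.card P) with hU
    by_cases hUc : d ≤ U.card
    · left
      obtain ⟨ι, hι⟩ := embed_into U hUc
      exact ⟨ι, fun i => (Finset.mem_filter.1 (hι i)).2⟩
    · right
      set V := Finset.univ.filter (fun j => ¬((x j : ℕ) + 1 < 2 * Fintype.card P)) with hV
      have hUV : U.card + V.card = 2 * d - 1 := by
        rw [hU, hV, Finset.card_filter_add_card_filter_not]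
        simp
      have hVc : d ≤ V.card := by omega
      obtain ⟨ι, hι⟩ := embed_into V hVc
      refine ⟨ι, fun i => ?_⟩
      have h2 := (Finset.mem_filter.1 (hι i)).2
      omega
  -- edge lemmas specialized
  have edgeGU : ∀ (x x' : Fin (2 * d - 1) → Fin (2 * Fintype.card P)), x' < x →
      (∃ ι : Fin d ↪ Fin (2 * d - 1), ∀ i, ((x (ι i) : ℕ) + 1 < 2 * Fintype.card P)) →
      Realizable P t (fun y => (if y = x then (1:ℤ) else 0) - if y = x' then 1 else 0) := by
    rintro x x' hlt ⟨ι, hι⟩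
    have ha : ∀ (p : P) (j : Fin (2 * d - 1)), (∃ i ∈ ρ p, ι i = j) →
        (x j : ℕ) + 1 < 2 * Fintype.card P := by
      rintro p j ⟨i, _, rfl⟩
      exact hι i
    exact real_edge_min ht ρ hρ pm hpmall hρ₀ ι x ha x' hlt
  have edgeGD : ∀ (x x'' : Fin (2 * d - 1) → Fin (2 * Fintype.card P)), x < x'' →
      (∃ ι : Fin d ↪ Fin (2 * d - 1), ∀ i, 1 ≤ (x (ι i) : ℕ)) →
      Realizable P t (fun y => (if y = x then (1:ℤ) else 0) - if y = x'' then 1 else 0) := by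
    rintro x x'' hlt ⟨ι, hι⟩
    set a : Fin (2 * d - 1) → Fin (2 * Fintype.card P) := fun j =>
      if (∃ i ∈ ρ pM, ι i = j) then ⟨(x j : ℕ) - 1, lt_of_le_of_lt (Nat.sub_le _ _) (x j).isLt⟩
      else x j with hadef
    have ha : ∀ (p : P) (j : Fin (2 * d - 1)), (∃ i ∈ ρ p, ι i = j) →
        (a j : ℕ) + 1 < 2 * Fintype.card P := by
      rintro p j ⟨i, hi, rfl⟩
      have hiM : i ∈ ρ pM := (hρ p pM).2 (hpMall p) hi
      have hcond : ∃ i' ∈ ρ pM, ι i' = ι i := ⟨i, hiM, rfl⟩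
      rw [hadef]
      simp only [if_pos hcond]
      have := (x (ι i)).isLt
      omega
    have hmax_eq : psiFun ρ ι a ha pM = x := by
      funext j
      by_cases hc : ∃ i ∈ ρ pM, ι i = j
      · rw [psiFun, dif_pos hc]
        obtain ⟨i, _, rfl⟩ := hc
        have h1 : 1 ≤ (x (ι i) : ℕ) := hι i
        apply Fin.ext
        show (a (ι i) : ℕ) + 1 = (x (ι i) : ℕ)
        rw [hadef]
        simp only [if_pos (⟨i, ‹i ∈ ρ pM›, rfl⟩ : ∃ i' ∈ ρ pM, ι i' = ι i)]
        omega
      · rw [psiFun, dif_neg hc, hadef]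
        simp only [if_neg hc]
    have := real_edge_max ht ρ hρ pM hpMall ι a ha x'' (by rw [hmax_eq]; exact hlt)
    rw [hmax_eq] at this
    exact this
  -- special points
  have hm1 : 0 < 2 * d - 1 := by omega
  set bstar : Fin (2 * d - 1) → Fin (2 * Fintype.card P) := fun _ => ⟨1, by omega⟩ with hbstar
  set bbot : Fin (2 * d - 1) → Fin (2 * Fintype.card P) := fun _ => ⟨0, by omega⟩ with hbbot
  set btop : Fin (2 * d - 1) → Fin (2 * Fintype.card P) :=
    fun _ => ⟨2 * Fintype.card P - 1, by omega⟩ with hbtop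
  have hle_bot : ∀ x, bbot ≤ x := by
    intro x j
    rw [hbbot]
    exact Fin.mk_le_mk.2 (Nat.zero_le _) |>.trans (le_refl _)
  have hle_top : ∀ x, x ≤ btop := by
    intro x j
    rw [hbtop]
    have := (x j).isLt
    exact Fin.le_def.2 (by simp; omega)
  have hne_bs_bot : bstar ≠ bbot := by
    intro h
    have := congrFun h ⟨0, hm1⟩
    rw [hbstar, hbbot] at this
    simp at this
  have hne_bs_top : bstar ≠ btop := by
    intro h
    have := congrFun h ⟨0, hm1⟩
    rw [hbstar, hbtop] at this
    simp at this
    omega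
  have hlt1 : bbot < bstar := lt_of_le_of_ne (hle_bot bstar) (Ne.symm hne_bs_bot)
  have hlt2 : bstar < btop := lt_of_le_of_ne (hle_top bstar) hne_bs_top
  obtain ⟨ι0, _⟩ := embed_into Finset.univ (by simp; omega)
  have hb1 : Realizable P t (fun y => (if y = bstar then (1:ℤ) else 0) - if y = bbot then 1 else 0) := by
    apply edgeGU bstar bbot hlt1
    exact ⟨ι0, fun i => by rw [hbstar]; simp; omega⟩
  have hb2 : Realizable P t (fun y => (if y = bstar then (1:ℤ) else 0) - if y = btop then 1 else 0) := by
    apply edgeGD bstar btop hlt2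
    exact ⟨ι0, fun i => by rw [hbstar]⟩
  -- connect every point to bstar
  have connect : ∀ x : Fin (2 * d - 1) → Fin (2 * Fintype.card P),
      Realizable P t (fun y => (if y = x then (1:ℤ) else 0) - if y = bstar then 1 else 0) := by
    intro x
    rcases dich x with hGU | hGD
    · by_cases hx : x = bbot
      · subst hx
        refine real_congr (real_neg ht hb1) (fun y => ?_)
        have : -((if y = bstar then (1:ℤ) else 0) - if y = bbot then 1 else 0)
            = (if y = bbot then (1:ℤ) else 0) - if y = bstar then 1 else 0 := by ring
        rw [this]
      · have hxlt : bbot < x := lt_of_le_of_ne (hle_bot x) (Ne.symm hx)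
        have e1 := edgeGU x bbot hxlt hGU
        refine real_congr (real_add e1 (real_neg ht hb1)) (fun y => ?_)
        have : ((if y = x then (1:ℤ) else 0) - if y = bbot then 1 else 0) +
            -((if y = bstar then (1:ℤ) else 0) - if y = bbot then 1 else 0)
            = (if y = x then (1:ℤ) else 0) - if y = bstar then 1 else 0 := by ring
        rw [this]
    · by_cases hx : x = btop
      · subst hx
        refine real_congr (real_neg ht hb2) (fun y => ?_)
        have : -((if y = bstar then (1:ℤ) else 0) - if y = btop then 1 else 0)
            = (if y = btop then (1:ℤ) else 0) - if y = bstar then 1 else 0 := by ring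
        rw [this]
      · have hxlt : x < btop := lt_of_le_of_ne (hle_top x) hx
        have e1 := edgeGD x btop hxlt hGD
        refine real_congr (real_add e1 (real_neg ht hb2)) (fun y => ?_)
        have : ((if y = x then (1:ℤ) else 0) - if y = btop then 1 else 0) +
            -((if y = bstar then (1:ℤ) else 0) - if y = btop then 1 else 0)
            = (if y = x then (1:ℤ) else 0) - if y = bstar then 1 else 0 := by ring
        rw [this]
  -- assemble f
  have hg : Realizable P t (fun y => ∑ x : Fin (2 * d - 1) → Fin (2 * Fintype.card P),
      f x * ((if y = x then (1:ℤ) else 0) - if y = bstar then 1 else 0)) :=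
    real_sum Finset.univ _ (fun x _ => real_intmul (f x) ht (connect x))
  have hgen : ∀ y, (∑ x : Fin (2 * d - 1) → Fin (2 * Fintype.card P),
      f x * ((if y = x then (1:ℤ) else 0) - if y = bstar then 1 else 0)) ≡ f y [ZMOD (t:ℤ)] := by
    intro y
    have hsplit : (∑ x : Fin (2 * d - 1) → Fin (2 * Fintype.card P),
        f x * ((if y = x then (1:ℤ) else 0) - if y = bstar then 1 else 0))
        = f y - (if y = bstar then
            (∑ x : Fin (2 * d - 1) → Fin (2 * Fintype.card P), f x) else 0) := by
      simp only [mul_sub]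
      rw [Finset.sum_sub_distrib]
      congr 1
      · simp only [mul_ite, mul_one, mul_zero]
        rw [Finset.sum_ite_eq]
        simp
      · by_cases hy : y = bstar <;> simp [hy]
    rw [hsplit]
    by_cases hy : y = bstar
    · simp only [if_pos hy]
      have := (Int.ModEq.refl (f y)).sub hf
      simpa using this
    · simp [hy]
  exact real_congr hg hgen
end

section
/- Let P be a d-dimensional grid [a_1] × ... × [a_d], and let c_1,...,c_{d−1} be positive integers satisfying c_i ≥ 12|P|^2 for every i ∈ [d−1]. Then the d-dimensional grid [2|P|] × [c_1] × ... × [c_{d−1}] can be partitioned into copies of P. -/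
/-- The subset `T` of a poset `Q` is *partitioned into copies of `P`* if there is a family
of pairwise disjoint copies of `P` in `Q` whose union is `T`. -/
def PartitionedIntoCopies (P : Type*) [PartialOrder P] {Q : Type*} [PartialOrder Q]
    (T : Set Q) : Prop :=
  ∃ 𝒞 : Set (Set Q), (∀ A ∈ 𝒞, IsCopy P A) ∧ 𝒞.PairwiseDisjoint id ∧ ⋃₀ 𝒞 = T

/-- `Tiles P Q` : the poset `Q` can be partitioned into copies of `P`, expressed by a
global bijection `ι × P ≃ Q` which is an order isomorphism on each fiber `{k} × P`. -/
def Tiles (P : Type*) [PartialOrder P] (Q : Type*) [PartialOrder Q] : Prop :=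
  ∃ (ι : Type) (E : ι × P ≃ Q), ∀ (k : ι) (x y : P), E (k, x) ≤ E (k, y) ↔ x ≤ y

section TilesBasic

variable {P Q R P' Q' P₁ P₂ Q₁ Q₂ : Type*}
  [PartialOrder P] [PartialOrder Q] [PartialOrder R] [PartialOrder P'] [PartialOrder Q']
  [PartialOrder P₁] [PartialOrder P₂] [PartialOrder Q₁] [PartialOrder Q₂]

theorem Tiles.partitionedIntoCopies (h : Tiles P Q) :
    PartitionedIntoCopies P (Set.univ : Set Q) := by
  obtain ⟨ι, E, hE⟩ := h
  refine ⟨Set.range (fun k => Set.range (fun x => E (k, x))), ?_, ?_, ?_⟩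
  · rintro A ⟨k, rfl⟩
    refine ⟨{ toFun := fun x => ⟨E (k, x), ⟨x, rfl⟩⟩
              invFun := fun y => (E.symm y.1).2
              left_inv := fun x => by simp
              right_inv := ?_
              map_rel_iff' := by intro x y; exact hE k x y }⟩
    rintro ⟨y, x, hx⟩
    apply Subtype.ext
    simp only
    rw [← hx, Equiv.symm_apply_apply]
  · rintro A ⟨k, rfl⟩ B ⟨l, rfl⟩ hAB
    refine Set.disjoint_left.2 ?_
    rintro z ⟨x, hx⟩ ⟨y, hy⟩
    apply hAB
    have : (k, x) = (l, y) := E.injective (hx.trans hy.symm)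
    rw [show k = l from congrArg Prod.fst this]
  · apply Set.eq_univ_of_forall
    intro z
    refine ⟨Set.range (fun x => E ((E.symm z).1, x)), ⟨(E.symm z).1, rfl⟩, (E.symm z).2, ?_⟩
    simp

end TilesBasic
section TilesComb

variable {P Q R P' Q' P₁ P₂ Q₁ Q₂ : Type*}
  [PartialOrder P] [PartialOrder Q] [PartialOrder R] [PartialOrder P'] [PartialOrder Q']
  [PartialOrder P₁] [PartialOrder P₂] [PartialOrder Q₁] [PartialOrder Q₂]

theorem tiles_refl (P : Type*) [PartialOrder P] : Tiles P P :=
  ⟨PUnit, Equiv.punitProd P, by intro k x y; simp⟩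

theorem Tiles.trans (h₁ : Tiles P Q) (h₂ : Tiles Q R) : Tiles P R := by
  obtain ⟨ι, E, hE⟩ := h₁
  obtain ⟨κ, F, hF⟩ := h₂
  refine ⟨κ × ι, (Equiv.prodAssoc κ ι P).trans
    ((Equiv.prodCongr (Equiv.refl κ) E).trans F), ?_⟩
  rintro ⟨l, k⟩ x y
  simp only [Equiv.trans_apply, Equiv.prodAssoc_apply, Equiv.prodCongr_apply, Equiv.refl_apply,
    Prod.map_apply]
  rw [hF, hE]

theorem Tiles.prod (h₁ : Tiles P₁ Q₁) (h₂ : Tiles P₂ Q₂) : Tiles (P₁ × P₂) (Q₁ × Q₂) := by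
  obtain ⟨ι₁, E₁, hE₁⟩ := h₁
  obtain ⟨ι₂, E₂, hE₂⟩ := h₂
  refine ⟨ι₁ × ι₂, (Equiv.prodProdProdComm ι₁ ι₂ P₁ P₂).trans (Equiv.prodCongr E₁ E₂), ?_⟩
  rintro ⟨k₁, k₂⟩ ⟨x₁, x₂⟩ ⟨y₁, y₂⟩
  simp only [Equiv.trans_apply, Equiv.prodProdProdComm_apply, Equiv.prodCongr_apply,
    Prod.map_apply, Prod.le_def]
  rw [hE₁, hE₂]

theorem Tiles.congr (h : Tiles P Q) (e : Q ≃ Q') (he : ∀ x y, x ≤ y ↔ e x ≤ e y) :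
    Tiles P Q' := by
  obtain ⟨ι, E, hE⟩ := h
  exact ⟨ι, E.trans e, fun k x y => by
    simp only [Equiv.trans_apply]; rw [← he, hE]⟩

theorem Tiles.congrP (h : Tiles P Q) (e : P' ≃ P) (he : ∀ x y, x ≤ y ↔ e x ≤ e y) :
    Tiles P' Q := by
  obtain ⟨ι, E, hE⟩ := h
  exact ⟨ι, (Equiv.prodCongr (Equiv.refl ι) e).trans E, fun k x y => by
    simp only [Equiv.trans_apply, Equiv.prodCongr_apply, Equiv.refl_apply, Prod.map_apply]
    rw [hE, ← he]⟩

end TilesComb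
/-- Key arithmetic: comparison of "band" decompositions. -/
theorem block_le_iff {m i i' ρ ρ' : ℕ} (hρ : ρ < m) (hρ' : ρ' < m) :
    i * m + ρ ≤ i' * m + ρ' ↔ (i < i' ∨ (i = i' ∧ ρ ≤ ρ')) := by
  constructor
  · intro h
    rcases lt_trichotomy i i' with h1 | h1 | h1
    · exact Or.inl h1
    · subst h1; exact Or.inr ⟨rfl, by omega⟩
    · exfalso
      have h2 : (i' + 1) * m ≤ i * m := mul_le_mul_left (by omega) m
      rw [add_one_mul] at h2
      omega
  · rintro (h1 | ⟨rfl, h2⟩)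
    · have h2 : (i + 1) * m ≤ i' * m := mul_le_mul_left (by omega) m
      rw [add_one_mul] at h2
      omega
    · omega

/-- The underlying function of the 2-dimensional tiling: the grid `[a*m] × [c]`,
`c = q*m + r`, is tiled by copies of `[a] × [m]` : "horizontal" copies indexed by
`(ρ, s) : Fin m × Fin q` (a rectangle: rows `{i*m+ρ}` times an interval of `m` columns)
and "diagonal" copies indexed by `k : Fin r` (rows `{i*m+ρ}`, column `ρ*m+k`). -/
def tile2DFun (m q r : ℕ) (a : ℕ) :
    ((Fin m × Fin q) ⊕ Fin r) × (Fin a × Fin m) → ℕ × ℕ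
  | (Sum.inl (ρ, s), (i, t)) =>
      (i.1 * m + ρ.1, s.1 * m + (if ρ.1 ≤ s.1 then r else 0) + t.1)
  | (Sum.inr k, (i, ρ)) => (i.1 * m + ρ.1, ρ.1 * m + k.1)

theorem tiles2D {a m c : ℕ} (hm : 0 < m) (hc : m * m ≤ c) :
    Tiles (Fin a × Fin m) (Fin (a * m) × Fin c) := by
  set q := c / m with hq_def
  set r := c % m with hr_def
  have hqr : q * m + r = c := by rw [hq_def, hr_def, mul_comm]; exact Nat.div_add_mod c m
  have hr : r < m := Nat.mod_lt _ hm
  have hq : m ≤ q := (Nat.le_div_iff_mul_le hm).2 hc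
  -- bounds
  have hrow : ∀ (i : Fin a) (ρ : Fin m), i.1 * m + ρ.1 < a * m := by
    intro i ρ
    have h2 : (i.1 + 1) * m ≤ a * m := mul_le_mul_left (by omega) m
    rw [add_one_mul] at h2
    omega
  have hcol1 : ∀ (ρ : Fin m) (s : Fin q) (t : Fin m),
      s.1 * m + (if ρ.1 ≤ s.1 then r else 0) + t.1 < c := by
    intro ρ s t
    have h2 : (s.1 + 1) * m ≤ q * m := mul_le_mul_left (by omega) m
    rw [add_one_mul] at h2
    split <;> omega
  have hcol2 : ∀ (ρ : Fin m) (k : Fin r), ρ.1 * m + k.1 < c := by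
    intro ρ k
    have h2 : (ρ.1 + 1) * m ≤ m * m := by
      have := mul_le_mul_left (show ρ.1 + 1 ≤ m by omega) m; rwa [] at this
    have h3 : m * m ≤ q * m := mul_le_mul_left hq m
    rw [add_one_mul] at h2
    omega
  set F : ((Fin m × Fin q) ⊕ Fin r) × (Fin a × Fin m) → Fin (a * m) × Fin c :=
    fun z => (⟨(tile2DFun m q r a z).1, by
        rcases z with ⟨k | k, i, t⟩ <;> simp only [tile2DFun] <;> exact hrow _ _⟩,
      ⟨(tile2DFun m q r a z).2, by
        rcases z with ⟨⟨ρ, s⟩ | k, i, t⟩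
        · exact hcol1 ρ s t
        · exact hcol2 t k⟩) with hF_def
  have hFsurj : Function.Surjective F := by
    rintro ⟨u, v⟩
    have hui : u.1 / m < a := by
      rw [Nat.div_lt_iff_lt_mul hm]; have := u.2; omega
    have humod : u.1 % m < m := Nat.mod_lt _ hm
    have hu : (u.1 / m) * m + u.1 % m = u.1 := Nat.div_add_mod' u.1 m
    set ρ : ℕ := u.1 % m with hρ_def
    by_cases h1 : v.1 < ρ * m
    · -- horizontal copy, left of the leftover block
      have hs : v.1 / m < ρ := by rwa [Nat.div_lt_iff_lt_mul hm]
      refine ⟨(Sum.inl (⟨ρ, humod⟩, ⟨v.1 / m, by omega⟩), (⟨u.1 / m, hui⟩, ⟨v.1 % m,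
        Nat.mod_lt _ hm⟩)), ?_⟩
      have hv : (v.1 / m) * m + v.1 % m = v.1 := Nat.div_add_mod' v.1 m
      simp only [hF_def, tile2DFun]
      refine Prod.ext (Fin.ext ?_) (Fin.ext ?_) <;> simp only
      · exact hu
      · rw [if_neg (by omega)]; omega
    · by_cases h2 : v.1 < ρ * m + r
      · -- diagonal copy
        refine ⟨(Sum.inr ⟨v.1 - ρ * m, by omega⟩, (⟨u.1 / m, hui⟩, ⟨ρ, humod⟩)), ?_⟩
        simp only [hF_def, tile2DFun]
        refine Prod.ext (Fin.ext ?_) (Fin.ext ?_) <;> simp only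
        · exact hu
        · omega
      · -- horizontal copy, right of the leftover block
        have hvr : r ≤ v.1 := by omega
        have hs1 : ρ ≤ (v.1 - r) / m := by
          rw [Nat.le_div_iff_mul_le hm]; omega
        have hs2 : (v.1 - r) / m < q := by
          rw [Nat.div_lt_iff_lt_mul hm]; have := v.2; omega
        have hv : ((v.1 - r) / m) * m + (v.1 - r) % m = v.1 - r := Nat.div_add_mod' (v.1 - r) m
        refine ⟨(Sum.inl (⟨ρ, humod⟩, ⟨(v.1 - r) / m, hs2⟩), (⟨u.1 / m, hui⟩,
          ⟨(v.1 - r) % m, Nat.mod_lt _ hm⟩)), ?_⟩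
        simp only [hF_def, tile2DFun]
        refine Prod.ext (Fin.ext ?_) (Fin.ext ?_) <;> simp only
        · exact hu
        · rw [if_pos hs1]; omega
  have hcard : Fintype.card (((Fin m × Fin q) ⊕ Fin r) × (Fin a × Fin m)) =
      Fintype.card (Fin (a * m) × Fin c) := by
    simp only [Fintype.card_prod, Fintype.card_sum, Fintype.card_fin]
    rw [← hqr]; ring
  have hFbij : Function.Bijective F :=
    (Fintype.bijective_iff_surjective_and_card F).2 ⟨hFsurj, hcard⟩
  refine ⟨(Fin m × Fin q) ⊕ Fin r, Equiv.ofBijective F hFbij, ?_⟩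
  rintro (⟨ρ, s⟩ | k) ⟨i, t⟩ ⟨i', t'⟩ <;>
    simp only [Equiv.ofBijective_apply, hF_def, tile2DFun, Prod.le_def, Fin.mk_le_mk,
      Fin.le_def]
  · rw [block_le_iff ρ.2 ρ.2, add_le_add_iff_left]
    omega
  · rw [block_le_iff t.2 t'.2, block_le_iff (k.2.trans hr) (k.2.trans hr)]
    omega

/-- The chain `[2n]` is tiled by two copies of the chain `[n]`. -/
theorem tilesChainDouble (n : ℕ) : Tiles (Fin n) (Fin (2 * n)) := by
  have hrow : ∀ (k : Fin 2) (x : Fin n), k.1 * n + x.1 < 2 * n := by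
    intro k x
    have h2 : (k.1 + 1) * n ≤ 2 * n := mul_le_mul_left (by omega) n
    rw [add_one_mul] at h2
    omega
  set F : Fin 2 × Fin n → Fin (2 * n) := fun z => ⟨z.1.1 * n + z.2.1, hrow z.1 z.2⟩
    with hF_def
  have hFsurj : Function.Surjective F := by
    intro u
    by_cases h : u.1 < n
    · exact ⟨(⟨0, by omega⟩, ⟨u.1, h⟩), Fin.ext (by simp [hF_def])⟩
    · refine ⟨(⟨1, by omega⟩, ⟨u.1 - n, by have := u.2; omega⟩), Fin.ext ?_⟩
      simp only [hF_def]
      have := u.2; omega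
  have hcard : Fintype.card (Fin 2 × Fin n) = Fintype.card (Fin (2 * n)) := by
    simp [Fintype.card_prod, Fintype.card_fin]
  have hFbij : Function.Bijective F :=
    (Fintype.bijective_iff_surjective_and_card F).2 ⟨hFsurj, hcard⟩
  refine ⟨Fin 2, Equiv.ofBijective F hFbij, ?_⟩
  intro k x y
  simp only [Equiv.ofBijective_apply, hF_def, Fin.mk_le_mk, Fin.le_def]
  exact add_le_add_iff_left _

theorem tiles_key : ∀ (d : ℕ) (a : Fin (d + 1) → ℕ), (∀ i, 0 < a i) → ∀ (c : Fin d → ℕ),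
    (∀ j, 4 * (∏ i, a i) ^ 2 ≤ c j) →
    Tiles (∀ i, Fin (a i)) (Fin (2 * ∏ i, a i) × ∀ j : Fin d, Fin (c j)) := by
  intro d
  induction d with
  | zero =>
    intro a _ c _
    have h1 : (∏ i : Fin 1, a i) = a 0 := Fin.prod_univ_one a
    have t := tilesChainDouble (a 0)
    have t2 : Tiles (Fin (a 0)) (Fin (2 * ∏ i, a i) × ∀ j : Fin 0, Fin (c j)) := by
      refine t.congr
        ⟨fun x => (finCongr (by rw [h1]) x, fun j => j.elim0),
         fun p => finCongr (by rw [h1]) p.1,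
         fun x => by simp,
         fun p => Prod.ext (by simp) (Subsingleton.elim _ _)⟩ ?_
      intro x y
      simp only [Equiv.coe_fn_mk, Prod.le_def, Fin.le_def, finCongr_apply_coe]
      constructor
      · exact fun h => ⟨h, le_refl _⟩
      · exact fun h => h.1
    refine t2.congrP
      ⟨fun f => f 0, fun x i => Fin.cases x (fun j => j.elim0) i,
       fun f => ?_, fun x => by simp⟩ ?_
    · funext i
      refine Fin.cases ?_ (fun j => j.elim0) i
      simp
    · intro f g
      rw [Pi.le_def]
      constructor
      · exact fun h => h 0
      · intro h i
        exact Fin.cases h (fun j => j.elim0) i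
  | succ d ih =>
    intro a ha c hc
    set n : ℕ := ∏ i, a i with hn_def
    set n' : ℕ := ∏ i : Fin (d + 1), a i.succ with hn'_def
    have hn : n = a 0 * n' := Fin.prod_univ_succ a
    have hn'pos : 0 < n' := Finset.prod_pos (fun i _ => ha i.succ)
    have hn'n : n' ≤ n := by
      rw [hn]; exact Nat.le_mul_of_pos_left n' (ha 0)
    have hsq : (4 : ℕ) * n' ^ 2 ≤ 4 * n ^ 2 := mul_le_mul_right (Nat.pow_le_pow_left hn'n 2) 4
    -- the 2-dimensional tiling of [2n] × [c 0] by [a 0] × [2n']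
    have t1 : Tiles (Fin (a 0) × Fin (2 * n')) (Fin (a 0 * (2 * n')) × Fin (c 0)) := by
      refine tiles2D (by omega) ?_
      calc (2 * n') * (2 * n') = 4 * n' ^ 2 := by ring
        _ ≤ 4 * n ^ 2 := hsq
        _ ≤ c 0 := hc 0
    have t2 : Tiles (Fin (a 0) × Fin (2 * n')) (Fin (2 * n) × Fin (c 0)) := by
      refine t1.congr (Equiv.prodCongr (finCongr (by rw [hn]; ring)) (Equiv.refl _)) ?_
      rintro ⟨x1, x2⟩ ⟨y1, y2⟩
      simp only [Equiv.prodCongr_apply, Prod.map_apply, Equiv.refl_apply, Prod.le_def,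
        Fin.le_def, finCongr_apply_coe]
    -- the inductive tiling
    have t5 : Tiles (∀ i : Fin (d + 1), Fin (a i.succ))
        (Fin (2 * n') × ∀ j : Fin d, Fin (c j.succ)) :=
      ih (fun i => a i.succ) (fun i => ha i.succ) (fun j => c j.succ)
        (fun j => le_trans hsq (hc j.succ))
    -- assemble
    have t3 : Tiles ((Fin (a 0) × Fin (2 * n')) × (∀ j : Fin d, Fin (c j.succ)))
        ((Fin (2 * n) × Fin (c 0)) × (∀ j : Fin d, Fin (c j.succ))) :=
      t2.prod (tiles_refl _)
    have t4 : Tiles ((Fin (a 0) × Fin (2 * n')) × (∀ j : Fin d, Fin (c j.succ)))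
        (Fin (2 * n) × ∀ j : Fin (d + 1), Fin (c j)) := by
      refine t3.congr ((Equiv.prodAssoc _ _ _).trans
        (Equiv.prodCongr (Equiv.refl _) (Fin.consEquiv (fun j => Fin (c j))))) ?_
      rintro ⟨⟨u, v⟩, g⟩ ⟨⟨u', v'⟩, g'⟩
      simp only [Equiv.trans_apply, Equiv.prodAssoc_apply, Equiv.prodCongr_apply,
        Equiv.refl_apply, Prod.map_apply, Fin.consEquiv_apply, Prod.le_def, Pi.le_def,
        Fin.forall_fin_succ, Fin.cons_zero, Fin.cons_succ]
      tauto
    have t6 : Tiles (Fin (a 0) × (∀ i : Fin (d + 1), Fin (a i.succ)))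
        (Fin (a 0) × (Fin (2 * n') × ∀ j : Fin d, Fin (c j.succ))) :=
      (tiles_refl (Fin (a 0))).prod t5
    have t7 : Tiles (Fin (a 0) × (∀ i : Fin (d + 1), Fin (a i.succ)))
        ((Fin (a 0) × Fin (2 * n')) × (∀ j : Fin d, Fin (c j.succ))) := by
      refine t6.congr (Equiv.prodAssoc _ _ _).symm ?_
      rintro ⟨u, v, g⟩ ⟨u', v', g'⟩
      simp only [Equiv.prodAssoc_symm_apply, Prod.le_def]
      tauto
    have t8 : Tiles (Fin (a 0) × (∀ i : Fin (d + 1), Fin (a i.succ)))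
        (Fin (2 * n) × ∀ j : Fin (d + 1), Fin (c j)) := t7.trans t4
    refine t8.congrP (Fin.consEquiv (fun i => Fin (a i))).symm ?_
    intro f g
    simp only [Fin.consEquiv_symm_apply, Prod.le_def, Pi.le_def, Fin.forall_fin_succ,
      Fin.tail]

/-- Let `P` be the `d`-dimensional grid `[a 1] × ... × [a d]` (modelled as `∀ i, Fin (a i)`
with the componentwise order, `|P| = ∏ i, a i`) and let `c 1, ..., c (d-1)` be positive
integers with `c i ≥ 12 |P|^2`. Then the `d`-dimensional grid
`[2|P|] × [c 1] × ... × [c (d-1)]` can be partitioned into copies of `P`. -/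
theorem grid_with_divisible_side_partition (d : ℕ) (hd : 0 < d)
    (a : Fin d → ℕ) (ha : ∀ i, 0 < a i)
    (c : Fin (d - 1) → ℕ) (hc : ∀ i, 12 * (∏ i, a i) ^ 2 ≤ c i) :
    PartitionedIntoCopies (∀ i, Fin (a i))
      (Set.univ : Set (Fin (2 * ∏ i, a i) × ∀ i : Fin (d - 1), Fin (c i))) := by
  obtain ⟨e, rfl⟩ : ∃ e, d = e + 1 := ⟨d - 1, by omega⟩
  refine Tiles.partitionedIntoCopies ?_
  refine tiles_key e a ha c ?_
  intro j
  refine le_trans ?_ (hc j)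
  have h4 : (4 : ℕ) ≤ 12 := by norm_num
  exact Nat.mul_le_mul_right _ h4
end

section
/- Let a, b, c be positive integers such that c ≥ a^2·b + 2a and a is even. Then the rectangle (2-dimensional grid) [ab] × [c] can be partitioned into copies of the rectangle [a] × [b]. -/
namespace RectPartitionAux

lemma dec_div {b : ℕ} (i : ℕ) {s : ℕ} (hs : s < b) : (i * b + s) / b = i := by
  rw [add_comm, Nat.add_mul_div_right _ _ (by omega : 0 < b), Nat.div_eq_of_lt hs, zero_add]

lemma dec_mod {b : ℕ} (i : ℕ) {s : ℕ} (hs : s < b) : (i * b + s) % b = s := by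
  rw [add_comm, Nat.add_mul_mod_self_right, Nat.mod_eq_of_lt hs]

lemma split_nat (n m : ℕ) : n = n / m * m + n % m := by
  conv_lhs => rw [← Nat.div_add_mod n m]
  ring

lemma aux_lt {i a s b : ℕ} (hi : i < a) (hs : s < b) : i * b + s < a * b := by
  have h1 : (i + 1) * b ≤ a * b := Nat.mul_le_mul_right _ (by omega)
  have h2 : (i + 1) * b = i * b + b := by ring
  omega

lemma aux_le {b i i' s s' : ℕ} (hs : s < b) (hs' : s' < b) :
    i * b + s ≤ i' * b + s' ↔ (i < i' ∨ (i = i' ∧ s ≤ s')) := by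
  constructor
  · intro h
    rcases Nat.lt_trichotomy i i' with h' | h' | h'
    · exact Or.inl h'
    · subst h'; exact Or.inr ⟨rfl, by omega⟩
    · exfalso
      have h1 : (i' + 1) * b ≤ i * b := Nat.mul_le_mul_right _ (by omega)
      have h2 : (i' + 1) * b = i' * b + b := by ring
      omega
  · rintro (h | ⟨rfl, h⟩)
    · have h1 : (i + 1) * b ≤ i' * b := Nat.mul_le_mul_right _ (by omega)
      have h2 : (i + 1) * b = i * b + b := by ring
      omega
    · omega

lemma base_inj {m u u' k k' : ℕ} (hk : k < m) (hk' : k' < m)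
    (h : u * m + k = u' * m + k') : u = u' ∧ k = k' := by
  have e1 := (aux_le hk hk').mp (le_of_eq h)
  have e2 := (aux_le hk' hk).mp (le_of_eq h.symm)
  omega

lemma partitioned_of_encode {P Q : Type*} [PartialOrder P] [PartialOrder Q]
    (T : Q → ℕ) (pos : Q → P)
    (hinj : ∀ x y : Q, T x = T y → pos x = pos y → x = y)
    (hfull : ∀ (x : Q) (p : P), ∃ y : Q, T y = T x ∧ pos y = p)
    (horder : ∀ x y : Q, T x = T y → (x ≤ y ↔ pos x ≤ pos y)) :
    PartitionedIntoCopies P (Set.univ : Set Q) := by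
  refine ⟨{A | ∃ x : Q, A = {y | T y = T x}}, ?_, ?_, ?_⟩
  · rintro A ⟨x, rfl⟩
    choose g hg1 hg2 using hfull x
    refine ⟨{ toFun := fun p => ⟨g p, hg1 p⟩
              invFun := fun y => pos y.1
              left_inv := fun p => hg2 p
              right_inv := ?_
              map_rel_iff' := ?_ }⟩
    · rintro ⟨y, hy⟩
      have hy' : T y = T x := hy
      exact Subtype.ext (hinj (g (pos y)) y ((hg1 _).trans hy'.symm) (hg2 _))
    · intro p q
      simp only [Equiv.coe_fn_mk, Subtype.mk_le_mk]
      rw [horder (g p) (g q) (by rw [hg1, hg1]), hg2, hg2]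
  · rintro A ⟨x, rfl⟩ B ⟨x', rfl⟩ hne
    simp only [Function.onFun, id_eq]
    rw [Set.disjoint_left]
    rintro y (hy : T y = T x) (hy' : T y = T x')
    exact hne (by rw [show T x = T x' by rw [← hy, ← hy']])
  · ext y
    simp only [Set.mem_sUnion, Set.mem_univ, iff_true]
    exact ⟨{z | T z = T y}, ⟨y, rfl⟩, rfl⟩

/-- Tile index of a cell. -/
def encT (a b c r col : ℕ) : ℕ :=
  if col < c % a * (b + 1) then
    3 * (col / (b + 1) * (b + 1) + (if r % b < col % (b + 1) then r % b else r % b + 1))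
  else if col < a * b + c % a then
    3 * ((col - c % a * (b + 1)) / b * b + r / a) + 1
  else
    3 * ((col - (a * b + c % a)) / a * a + r / b) + 2

/-- First coordinate of position within tile. -/
def encI (a b c r col : ℕ) : ℕ :=
  if col < c % a * (b + 1) then r / b
  else if col < a * b + c % a then r % a
  else (col - (a * b + c % a)) % a

/-- Second coordinate of position within tile. -/
def encJ (a b c r col : ℕ) : ℕ :=
  if col < c % a * (b + 1) then
    (if r % b < col % (b + 1) then col % (b + 1) - 1 else col % (b + 1))
  else if col < a * b + c % a then (col - c % a * (b + 1)) % b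
  else r % b

lemma encA (a b c : ℕ) {u j s : ℕ} (i : ℕ) (hu : u < c % a) (hj : j ≤ b) (hs : s < b) :
    encT a b c (i * b + s) (u * (b + 1) + j)
      = 3 * (u * (b + 1) + (if s < j then s else s + 1)) ∧
    encI a b c (i * b + s) (u * (b + 1) + j) = i ∧
    encJ a b c (i * b + s) (u * (b + 1) + j) = (if s < j then j - 1 else j) := by
  have hcol : u * (b + 1) + j < c % a * (b + 1) := by
    have h1 : (u + 1) * (b + 1) ≤ c % a * (b + 1) := Nat.mul_le_mul_right _ (by omega)
    have h2 : (u + 1) * (b + 1) = u * (b + 1) + (b + 1) := by ring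
    omega
  have hdiv : (u * (b + 1) + j) / (b + 1) = u := dec_div u (by omega)
  have hmod : (u * (b + 1) + j) % (b + 1) = j := dec_mod u (by omega)
  have hrd : (i * b + s) / b = i := dec_div i hs
  have hrm : (i * b + s) % b = s := dec_mod i hs
  refine ⟨?_, ?_, ?_⟩ <;>
    simp only [encT, encI, encJ, if_pos hcol, hdiv, hmod, hrd, hrm]

lemma encB (a b c : ℕ) {u j t ρ : ℕ} (hzu : c % a + u < a) (hj : j < b) (ht : t < b)
    (hρ : ρ < a) :
    encT a b c (t * a + ρ) (c % a * (b + 1) + (u * b + j)) = 3 * (u * b + t) + 1 ∧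
    encI a b c (t * a + ρ) (c % a * (b + 1) + (u * b + j)) = ρ ∧
    encJ a b c (t * a + ρ) (c % a * (b + 1) + (u * b + j)) = j := by
  have h0 : ¬ (c % a * (b + 1) + (u * b + j) < c % a * (b + 1)) := by omega
  have h1 : c % a * (b + 1) + (u * b + j) < a * b + c % a := by
    have e1 : c % a * (b + 1) = c % a * b + c % a := by ring
    have e2 : (c % a + u + 1) * b ≤ a * b := Nat.mul_le_mul_right _ (by omega)
    have e3 : (c % a + u + 1) * b = c % a * b + u * b + b := by ring
    omega
  have h2 : c % a * (b + 1) + (u * b + j) - c % a * (b + 1) = u * b + j := by omega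
  have hdiv : (u * b + j) / b = u := dec_div u hj
  have hmod : (u * b + j) % b = j := dec_mod u hj
  have hrd : (t * a + ρ) / a = t := dec_div t hρ
  have hrm : (t * a + ρ) % a = ρ := dec_mod t hρ
  refine ⟨?_, ?_, ?_⟩ <;>
    simp only [encT, encI, encJ, if_neg h0, if_pos h1, h2, hdiv, hmod, hrd, hrm]

lemma encC (a b c : ℕ) {p g ρ : ℕ} (u : ℕ) (hz : c % a < a) (hp : p < a) (hg : g < a)
    (hρ : ρ < b) :
    encT a b c (g * b + ρ) (a * b + c % a + (u * a + p)) = 3 * (u * a + g) + 2 ∧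
    encI a b c (g * b + ρ) (a * b + c % a + (u * a + p)) = p ∧
    encJ a b c (g * b + ρ) (a * b + c % a + (u * a + p)) = ρ := by
  have h0 : ¬ (a * b + c % a + (u * a + p) < c % a * (b + 1)) := by
    have e1 : c % a * (b + 1) = c % a * b + c % a := by ring
    have e2 : c % a * b ≤ a * b := Nat.mul_le_mul_right _ (by omega)
    omega
  have h1 : ¬ (a * b + c % a + (u * a + p) < a * b + c % a) := by omega
  have h2 : a * b + c % a + (u * a + p) - (a * b + c % a) = u * a + p := by omega
  have hdiv : (u * a + p) / a = u := dec_div u hp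
  have hmod : (u * a + p) % a = p := dec_mod u hp
  have hrd : (g * b + ρ) / b = g := dec_div g hρ
  have hrm : (g * b + ρ) % b = ρ := dec_mod g hρ
  refine ⟨?_, ?_, ?_⟩ <;>
    simp only [encT, encI, encJ, if_neg h0, if_neg h1, h2, hdiv, hmod, hrd, hrm]

lemma cell_cases (a b c : ℕ) (ha : 0 < a) (hb : 0 < b)
    {r col : ℕ} (hr : r < a * b) (hcol : col < c) :
    (∃ u j i s, u < c % a ∧ j ≤ b ∧ i < a ∧ s < b ∧ r = i * b + s ∧ col = u * (b + 1) + j) ∨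
    (∃ u j t ρ, c % a + u < a ∧ j < b ∧ t < b ∧ ρ < a ∧ r = t * a + ρ ∧
        col = c % a * (b + 1) + (u * b + j)) ∨
    (∃ u p g ρ, a * b + c % a + (u * a + p) < c ∧ p < a ∧ g < a ∧ ρ < b ∧ r = g * b + ρ ∧
        col = a * b + c % a + (u * a + p)) := by
  by_cases hA : col < c % a * (b + 1)
  · left
    refine ⟨col / (b + 1), col % (b + 1), r / b, r % b, ?_, ?_, ?_, ?_, ?_, ?_⟩
    · exact (Nat.div_lt_iff_lt_mul (by omega)).mpr hA
    · have := Nat.mod_lt col (y := b + 1) (by omega); omega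
    · exact (Nat.div_lt_iff_lt_mul hb).mpr hr
    · exact Nat.mod_lt _ hb
    · exact split_nat r b
    · exact split_nat col (b + 1)
  · by_cases hB : col < a * b + c % a
    · right; left
      have hge : c % a * (b + 1) ≤ col := le_of_not_gt hA
      have hcol2 : col - c % a * (b + 1) < (a - c % a) * b := by
        have e1 : c % a * (b + 1) = c % a * b + c % a := by ring
        have e2 : (a - c % a) * b = a * b - c % a * b := Nat.sub_mul _ _ _
        have e3 : c % a * b ≤ a * b := Nat.mul_le_mul_right _ (Nat.le_of_lt (Nat.mod_lt _ ha))
        omega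
      refine ⟨(col - c % a * (b + 1)) / b, (col - c % a * (b + 1)) % b, r / a, r % a,
        ?_, ?_, ?_, ?_, ?_, ?_⟩
      · have hu : (col - c % a * (b + 1)) / b < a - c % a :=
          (Nat.div_lt_iff_lt_mul hb).mpr hcol2
        have := Nat.mod_lt c ha
        omega
      · exact Nat.mod_lt _ hb
      · exact (Nat.div_lt_iff_lt_mul ha).mpr (by rw [mul_comm]; exact hr)
      · exact Nat.mod_lt _ ha
      · exact split_nat r a
      · rw [← split_nat (col - c % a * (b + 1)) b]; omega
    · right; right
      have hge : a * b + c % a ≤ col := le_of_not_gt hB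
      refine ⟨(col - (a * b + c % a)) / a, (col - (a * b + c % a)) % a, r / b, r % b,
        ?_, ?_, ?_, ?_, ?_, ?_⟩
      · rw [← split_nat (col - (a * b + c % a)) a]; omega
      · exact Nat.mod_lt _ ha
      · exact (Nat.div_lt_iff_lt_mul hb).mpr hr
      · exact Nat.mod_lt _ hb
      · exact split_nat r b
      · rw [← split_nat (col - (a * b + c % a)) a]; omega

lemma encA_full (a b c : ℕ) {u j s : ℕ} (hu : u < c % a) (hj : j ≤ b) (hs : s < b)
    {i2 j2 : ℕ} (hi2 : i2 < a) (hj2 : j2 < b) :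
    ∃ r' col', r' < a * b ∧ col' < c % a * (b + 1) ∧
      encT a b c r' col' = 3 * (u * (b + 1) + (if s < j then s else s + 1)) ∧
      encI a b c r' col' = i2 ∧ encJ a b c r' col' = j2 := by
  have hcb : ∀ jj : ℕ, jj ≤ b → u * (b + 1) + jj < c % a * (b + 1) := by
    intro jj hjj
    have h1 : (u + 1) * (b + 1) ≤ c % a * (b + 1) := Nat.mul_le_mul_right _ (by omega)
    have h2 : (u + 1) * (b + 1) = u * (b + 1) + (b + 1) := by ring
    omega
  by_cases h1 : s < j
  · by_cases h2 : j2 < s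
    · obtain ⟨e1, e2, e3⟩ := encA a b c i2 hu (show j2 ≤ b by omega) (show s - 1 < b by omega)
      refine ⟨i2 * b + (s - 1), u * (b + 1) + j2, aux_lt hi2 (by omega), hcb j2 (by omega),
        ?_, e2, ?_⟩
      · rw [e1, if_neg (by omega : ¬ (s - 1 < j2)), if_pos h1]; omega
      · rw [e3, if_neg (by omega : ¬ (s - 1 < j2))]
    · obtain ⟨e1, e2, e3⟩ := encA a b c i2 hu (show j2 + 1 ≤ b by omega) hs
      refine ⟨i2 * b + s, u * (b + 1) + (j2 + 1), aux_lt hi2 hs, hcb (j2 + 1) (by omega),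
        ?_, e2, ?_⟩
      · rw [e1, if_pos (by omega : s < j2 + 1), if_pos h1]
      · rw [e3, if_pos (by omega : s < j2 + 1)]; omega
  · by_cases h2 : j2 ≤ s
    · obtain ⟨e1, e2, e3⟩ := encA a b c i2 hu (show j2 ≤ b by omega) hs
      refine ⟨i2 * b + s, u * (b + 1) + j2, aux_lt hi2 hs, hcb j2 (by omega), ?_, e2, ?_⟩
      · rw [e1, if_neg (by omega : ¬ (s < j2)), if_neg h1]
      · rw [e3, if_neg (by omega : ¬ (s < j2))]
    · obtain ⟨e1, e2, e3⟩ := encA a b c i2 hu (show j2 + 1 ≤ b by omega)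
        (show s + 1 < b by omega)
      refine ⟨i2 * b + (s + 1), u * (b + 1) + (j2 + 1), aux_lt hi2 (by omega),
        hcb (j2 + 1) (by omega), ?_, e2, ?_⟩
      · rw [e1, if_pos (by omega : s + 1 < j2 + 1), if_neg h1]
      · rw [e3, if_pos (by omega : s + 1 < j2 + 1)]; omega

end RectPartitionAux

open RectPartitionAux in
/-- Let `a, b, c` be positive integers with `c ≥ a²b + 2a` and `a` even. Then the rectangle
`[ab] × [c]` (modelled as `Fin (a*b) × Fin c` with the componentwise order) can be
partitioned into copies of the rectangle `[a] × [b]`. -/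
theorem rectangle_partition (a b c : ℕ) (ha : 0 < a) (hb : 0 < b) (hc : 0 < c)
    (haeven : Even a) (hbound : a ^ 2 * b + 2 * a ≤ c) :
    PartitionedIntoCopies (Fin a × Fin b) (Set.univ : Set (Fin (a * b) × Fin c)) := by
  have hz : c % a < a := Nat.mod_lt _ ha
  have hbound' : a * (a * b) + 2 * a ≤ c := by
    have e : a ^ 2 * b = a * (a * b) := by ring
    linarith [hbound]
  have habz : a * b + c % a ≤ c := by
    have h1 : a * b ≤ a * (a * b) := Nat.le_mul_of_pos_left (a * b) ha
    omega
  have hzc : c % a * (b + 1) ≤ c := by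
    have e1 : c % a * (b + 1) = c % a * b + c % a := by ring
    have e2 : c % a * b ≤ a * b := Nat.mul_le_mul_right _ (le_of_lt hz)
    omega
  have hY : c = a * b + c % a + (c / a - b) * a := by
    have hq : b + 1 ≤ c / a := by
      rw [Nat.le_div_iff_mul_le ha]
      have e : (b + 1) * a = a * b + a := by ring
      have h1 : a * b ≤ a * (a * b) := Nat.le_mul_of_pos_left (a * b) ha
      omega
    have h1 := Nat.div_add_mod c a
    have h2 : a * (c / a) = a * b + (c / a - b) * a := by
      have e : c / a = b + (c / a - b) := by omega
      calc a * (c / a) = a * (b + (c / a - b)) := by rw [← e]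
        _ = a * b + (c / a - b) * a := by ring
    omega
  have hIb : ∀ x : Fin (a * b) × Fin c, encI a b c x.1.1 x.2.1 < a := by
    rintro ⟨⟨r, hrlt⟩, ⟨col, hcollt⟩⟩
    show encI a b c r col < a
    rcases cell_cases a b c ha hb hrlt hcollt with
      ⟨u, j, i, s, hu, hj, hi, hs, rfl, rfl⟩ | ⟨u, j, t, ρ, hu, hj, ht, hρ, rfl, rfl⟩ |
      ⟨u, p, g, ρ, hult, hp, hg, hρ, rfl, rfl⟩
    · rw [(encA a b c i hu hj hs).2.1]; exact hi
    · rw [(encB a b c hu hj ht hρ).2.1]; exact hρ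
    · rw [(encC a b c u hz hp hg hρ).2.1]; exact hp
  have hJb : ∀ x : Fin (a * b) × Fin c, encJ a b c x.1.1 x.2.1 < b := by
    rintro ⟨⟨r, hrlt⟩, ⟨col, hcollt⟩⟩
    show encJ a b c r col < b
    rcases cell_cases a b c ha hb hrlt hcollt with
      ⟨u, j, i, s, hu, hj, hi, hs, rfl, rfl⟩ | ⟨u, j, t, ρ, hu, hj, ht, hρ, rfl, rfl⟩ |
      ⟨u, p, g, ρ, hult, hp, hg, hρ, rfl, rfl⟩
    · rw [(encA a b c i hu hj hs).2.2]; split_ifs <;> omega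
    · rw [(encB a b c hu hj ht hρ).2.2]; exact hj
    · rw [(encC a b c u hz hp hg hρ).2.2]; exact hρ
  apply partitioned_of_encode (fun x => encT a b c x.1.1 x.2.1)
    (fun x => (⟨encI a b c x.1.1 x.2.1, hIb x⟩, ⟨encJ a b c x.1.1 x.2.1, hJb x⟩))
  -- injectivity
  · rintro ⟨⟨r, hrlt⟩, ⟨col, hcollt⟩⟩ ⟨⟨r', hrlt'⟩, ⟨col', hcollt'⟩⟩ hT hpos
    have hT' : encT a b c r col = encT a b c r' col' := hT
    simp only [Prod.mk.injEq, Fin.mk.injEq] at hpos ⊢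
    obtain ⟨hI, hJ⟩ := hpos
    rcases cell_cases a b c ha hb hrlt hcollt with
      ⟨u, j, i, s, hu, hj, hi, hs, rfl, rfl⟩ | ⟨u, j, t, ρ, hu, hj, ht, hρ, rfl, rfl⟩ |
      ⟨u, p, g, ρ, hult, hp, hg, hρ, rfl, rfl⟩ <;>
      rcases cell_cases a b c ha hb hrlt' hcollt' with
        ⟨u', j', i', s', hu', hj', hi', hs', rfl, rfl⟩ |
        ⟨u', j', t', ρ', hu', hj', ht', hρ', rfl, rfl⟩ |
        ⟨u', p', g', ρ', hult', hp', hg', hρ', rfl, rfl⟩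
    -- A-A
    · rw [(encA a b c i hu hj hs).1, (encA a b c i' hu' hj' hs').1] at hT'
      rw [(encA a b c i hu hj hs).2.1, (encA a b c i' hu' hj' hs').2.1] at hI
      rw [(encA a b c i hu hj hs).2.2, (encA a b c i' hu' hj' hs').2.2] at hJ
      subst hI
      set K := if s < j then s else s + 1 with hK
      set K' := if s' < j' then s' else s' + 1 with hK'
      obtain ⟨hueq, hkeq⟩ := base_inj (show K < b + 1 by rw [hK]; split_ifs <;> omega)
        (show K' < b + 1 by rw [hK']; split_ifs <;> omega)
        (show u * (b + 1) + K = u' * (b + 1) + K' by omega)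
      subst hueq
      rw [hK, hK'] at hkeq
      split_ifs at hkeq hJ <;> omega
    -- A-B
    · rw [(encA a b c i hu hj hs).1, (encB a b c hu' hj' ht' hρ').1] at hT'
      exfalso; split_ifs at hT' <;> omega
    -- A-C
    · rw [(encA a b c i hu hj hs).1, (encC a b c u' hz hp' hg' hρ').1] at hT'
      exfalso; split_ifs at hT' <;> omega
    -- B-A
    · rw [(encB a b c hu hj ht hρ).1, (encA a b c i' hu' hj' hs').1] at hT'
      exfalso; split_ifs at hT' <;> omega
    -- B-B
    · rw [(encB a b c hu hj ht hρ).1, (encB a b c hu' hj' ht' hρ').1] at hT'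
      rw [(encB a b c hu hj ht hρ).2.1, (encB a b c hu' hj' ht' hρ').2.1] at hI
      rw [(encB a b c hu hj ht hρ).2.2, (encB a b c hu' hj' ht' hρ').2.2] at hJ
      obtain ⟨hueq, hteq⟩ := base_inj ht ht' (show u * b + t = u' * b + t' by omega)
      subst hueq; subst hteq; subst hI; subst hJ
      exact ⟨rfl, rfl⟩
    -- B-C
    · rw [(encB a b c hu hj ht hρ).1, (encC a b c u' hz hp' hg' hρ').1] at hT'
      exfalso; omega
    -- C-A
    · rw [(encC a b c u hz hp hg hρ).1, (encA a b c i' hu' hj' hs').1] at hT'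
      exfalso; split_ifs at hT' <;> omega
    -- C-B
    · rw [(encC a b c u hz hp hg hρ).1, (encB a b c hu' hj' ht' hρ').1] at hT'
      exfalso; omega
    -- C-C
    · rw [(encC a b c u hz hp hg hρ).1, (encC a b c u' hz hp' hg' hρ').1] at hT'
      rw [(encC a b c u hz hp hg hρ).2.1, (encC a b c u' hz hp' hg' hρ').2.1] at hI
      rw [(encC a b c u hz hp hg hρ).2.2, (encC a b c u' hz hp' hg' hρ').2.2] at hJ
      obtain ⟨hueq, hgeq⟩ := base_inj hg hg' (show u * a + g = u' * a + g' by omega)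
      subst hueq; subst hgeq; subst hI; subst hJ
      exact ⟨rfl, rfl⟩
  -- fullness
  · rintro ⟨⟨r, hrlt⟩, ⟨col, hcollt⟩⟩ ⟨⟨i2, hi2⟩, ⟨j2, hj2⟩⟩
    rcases cell_cases a b c ha hb hrlt hcollt with
      ⟨u, j, i, s, hu, hj, hi, hs, rfl, rfl⟩ | ⟨u, j, t, ρ, hu, hj, ht, hρ, rfl, rfl⟩ |
      ⟨u, p, g, ρ, hult, hp, hg, hρ, rfl, rfl⟩
    · obtain ⟨r', col', hr', hcol', hT', hI', hJ'⟩ := encA_full a b c hu hj hs hi2 hj2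
      refine ⟨(⟨r', hr'⟩, ⟨col', lt_of_lt_of_le hcol' hzc⟩), ?_, ?_⟩
      · show encT a b c r' col' = encT a b c (i * b + s) (u * (b + 1) + j)
        rw [hT', (encA a b c i hu hj hs).1]
      · simp only [Prod.mk.injEq, Fin.mk.injEq]
        exact ⟨hI', hJ'⟩
    · refine ⟨(⟨t * a + i2, ?_⟩, ⟨c % a * (b + 1) + (u * b + j2), ?_⟩), ?_, ?_⟩
      · have e : b * a = a * b := Nat.mul_comm b a
        have h2 := aux_lt ht hi2
        omega
      · have e1 : c % a * (b + 1) = c % a * b + c % a := by ring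
        have e2 : (c % a + u + 1) * b ≤ a * b := Nat.mul_le_mul_right _ (by omega)
        have e3 : (c % a + u + 1) * b = c % a * b + u * b + b := by ring
        omega
      · show encT a b c (t * a + i2) (c % a * (b + 1) + (u * b + j2))
            = encT a b c (t * a + ρ) (c % a * (b + 1) + (u * b + j))
        rw [(encB a b c hu hj2 ht hi2).1, (encB a b c hu hj ht hρ).1]
      · simp only [Prod.mk.injEq, Fin.mk.injEq]
        exact ⟨(encB a b c hu hj2 ht hi2).2.1, (encB a b c hu hj2 ht hi2).2.2⟩
    · have hu2 : u + 1 ≤ c / a - b := by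
        by_contra hcon
        push_neg at hcon
        have h3 : (c / a - b) * a ≤ u * a := Nat.mul_le_mul_right _ (by omega)
        omega
      have hcolb : a * b + c % a + (u * a + i2) < c := by
        have h4 : (u + 1) * a ≤ (c / a - b) * a := Nat.mul_le_mul_right _ hu2
        have e : (u + 1) * a = u * a + a := by ring
        omega
      refine ⟨(⟨g * b + j2, aux_lt hg hj2⟩, ⟨a * b + c % a + (u * a + i2), hcolb⟩), ?_, ?_⟩
      · show encT a b c (g * b + j2) (a * b + c % a + (u * a + i2))
            = encT a b c (g * b + ρ) (a * b + c % a + (u * a + p))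
        rw [(encC a b c u hz hi2 hg hj2).1, (encC a b c u hz hp hg hρ).1]
      · simp only [Prod.mk.injEq, Fin.mk.injEq]
        exact ⟨(encC a b c u hz hi2 hg hj2).2.1, (encC a b c u hz hi2 hg hj2).2.2⟩
  -- order compatibility
  · rintro ⟨⟨r, hrlt⟩, ⟨col, hcollt⟩⟩ ⟨⟨r', hrlt'⟩, ⟨col', hcollt'⟩⟩ hT
    have hT' : encT a b c r col = encT a b c r' col' := hT
    simp only [Prod.le_def, Fin.mk_le_mk]
    rcases cell_cases a b c ha hb hrlt hcollt with
      ⟨u, j, i, s, hu, hj, hi, hs, rfl, rfl⟩ | ⟨u, j, t, ρ, hu, hj, ht, hρ, rfl, rfl⟩ |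
      ⟨u, p, g, ρ, hult, hp, hg, hρ, rfl, rfl⟩ <;>
      rcases cell_cases a b c ha hb hrlt' hcollt' with
        ⟨u', j', i', s', hu', hj', hi', hs', rfl, rfl⟩ |
        ⟨u', j', t', ρ', hu', hj', ht', hρ', rfl, rfl⟩ |
        ⟨u', p', g', ρ', hult', hp', hg', hρ', rfl, rfl⟩
    -- A-A
    · rw [(encA a b c i hu hj hs).1, (encA a b c i' hu' hj' hs').1] at hT'
      rw [(encA a b c i hu hj hs).2.1, (encA a b c i' hu' hj' hs').2.1,
          (encA a b c i hu hj hs).2.2, (encA a b c i' hu' hj' hs').2.2]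
      rw [aux_le hs hs', aux_le (show j < b + 1 by omega) (show j' < b + 1 by omega)]
      set K := if s < j then s else s + 1 with hK
      set K' := if s' < j' then s' else s' + 1 with hK'
      obtain ⟨hueq, hkeq⟩ := base_inj (show K < b + 1 by rw [hK]; split_ifs <;> omega)
        (show K' < b + 1 by rw [hK']; split_ifs <;> omega)
        (show u * (b + 1) + K = u' * (b + 1) + K' by omega)
      subst hueq
      rw [hK, hK'] at hkeq
      split_ifs at hkeq ⊢ <;> omega
    -- A-B
    · rw [(encA a b c i hu hj hs).1, (encB a b c hu' hj' ht' hρ').1] at hT'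
      exfalso; split_ifs at hT' <;> omega
    -- A-C
    · rw [(encA a b c i hu hj hs).1, (encC a b c u' hz hp' hg' hρ').1] at hT'
      exfalso; split_ifs at hT' <;> omega
    -- B-A
    · rw [(encB a b c hu hj ht hρ).1, (encA a b c i' hu' hj' hs').1] at hT'
      exfalso; split_ifs at hT' <;> omega
    -- B-B
    · rw [(encB a b c hu hj ht hρ).1, (encB a b c hu' hj' ht' hρ').1] at hT'
      rw [(encB a b c hu hj ht hρ).2.1, (encB a b c hu' hj' ht' hρ').2.1,
          (encB a b c hu hj ht hρ).2.2, (encB a b c hu' hj' ht' hρ').2.2]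
      obtain ⟨hueq, hteq⟩ := base_inj ht ht' (show u * b + t = u' * b + t' by omega)
      subst hueq; subst hteq
      rw [aux_le hρ hρ']
      omega
    -- B-C
    · rw [(encB a b c hu hj ht hρ).1, (encC a b c u' hz hp' hg' hρ').1] at hT'
      exfalso; omega
    -- C-A
    · rw [(encC a b c u hz hp hg hρ).1, (encA a b c i' hu' hj' hs').1] at hT'
      exfalso; split_ifs at hT' <;> omega
    -- C-B
    · rw [(encC a b c u hz hp hg hρ).1, (encB a b c hu' hj' ht' hρ').1] at hT'
      exfalso; omega
    -- C-C
    · rw [(encC a b c u hz hp hg hρ).1, (encC a b c u' hz hp' hg' hρ').1] at hT'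
      rw [(encC a b c u hz hp hg hρ).2.1, (encC a b c u' hz hp' hg' hρ').2.1,
          (encC a b c u hz hp hg hρ).2.2, (encC a b c u' hz hp' hg' hρ').2.2]
      obtain ⟨hueq, hgeq⟩ := base_inj hg hg' (show u * a + g = u' * a + g' by omega)
      subst hueq; subst hgeq
      rw [aux_le hρ hρ']
      omega
end
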